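/- arXiv:1701.05115 — 12 statements merged into one kernel-verified Lean document; each statement's English description precedes it below -/
import Mathlib

section
/- Let G be a set and ⊳ a single-conclusion entailment relation for G. Then there exists a meet-semilattice S and a map f : G → S such that for every nonempty finite subset A of G and every b ∈ G, the infimum ⊓_{a∈A} f(a) ≤ f(b) holds in S if and only if A ⊳ b. (Fundamental theorem of single-conclusion entailment relations: the relation generates a meet-semilattice whose order reflects the relation.) -/
/-- A single-conclusion entailment relation for a set `G`: a relation between
nonempty finite subsets of `G` and elements of `G` that is reflexive, monotone
and transitive. -/
structure IsSCEntail {G : Type*} [DecidableEq G] (r : Finset G → G → Prop) : Prop where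
  refl : ∀ a : G, r {a} a
  mono : ∀ ⦃A : Finset G⦄ (A' : Finset G) ⦃b : G⦄, A.Nonempty → r A b → r (A ∪ A') b
  trans : ∀ ⦃A : Finset G⦄ ⦃b c : G⦄, A.Nonempty → r A c → r (insert c A) b → r A b

section Aux

variable {G : Type u} [DecidableEq G] {r : Finset G → G → Prop}

lemma sc_mem (h : IsSCEntail r) {A : Finset G} {b : G} (hb : b ∈ A) : r A b := by
  have h1 := h.refl b
  have h2 := h.mono A (Finset.singleton_nonempty b) h1
  rwa [← Finset.insert_eq, Finset.insert_eq_self.mpr hb] at h2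

lemma sc_cut_aux (h : IsSCEntail r) {A : Finset G} (hA : A.Nonempty) (B : Finset G) {c : G}
    (hab : ∀ b ∈ B, r A b) (hc : r (A ∪ B) c) : r A c := by
  induction B using Finset.induction_on with
  | empty => rwa [Finset.union_empty] at hc
  | @insert b B hb ih =>
    have hAb : r A b := hab b (Finset.mem_insert_self b B)
    have hAB : r (A ∪ B) b := h.mono B (hA) hAb
    have : r (insert b (A ∪ B)) c := by
      rwa [Finset.union_insert] at hc
    exact ih (fun x hx => hab x (Finset.mem_insert_of_mem hx))
      (h.trans (hA.mono Finset.subset_union_left) hAB this)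

lemma sc_cut (h : IsSCEntail r) {A B : Finset G} {c : G} (hA : A.Nonempty) (hB : B.Nonempty)
    (hab : ∀ b ∈ B, r A b) (hc : r B c) : r A c := by
  apply sc_cut_aux h hA B hab
  have := h.mono A hB hc
  rwa [Finset.union_comm] at this

def scSetoid (r : Finset G → G → Prop) (h : IsSCEntail r) :
    Setoid {A : Finset G // A.Nonempty} where
  r A B := (∀ b ∈ B.1, r A.1 b) ∧ (∀ a ∈ A.1, r B.1 a)
  iseqv := by
    constructor
    · exact fun A => ⟨fun b hb => sc_mem h hb, fun b hb => sc_mem h hb⟩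
    · exact fun h1 => ⟨h1.2, h1.1⟩
    · rintro A B C ⟨h1, h2⟩ ⟨h3, h4⟩
      exact ⟨fun c hc => sc_cut h A.2 B.2 h1 (h3 c hc),
             fun a ha => sc_cut h C.2 B.2 h4 (h2 a ha)⟩

end Aux

/-- Fundamental theorem of single-conclusion entailment relations: the relation
generates a meet-semilattice whose order reflects the relation. -/
theorem fundamental_theorem_of_sc_entailment_relations {G : Type u} [DecidableEq G]
    (r : Finset G → G → Prop) (h : IsSCEntail r) :
    ∃ (S : Type u) (_ : SemilatticeInf S) (f : G → S),
      ∀ (A : Finset G) (hA : A.Nonempty) (b : G),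
        A.inf' hA f ≤ f b ↔ r A b := by
  set S := Quotient (scSetoid r h) with hS
  have le_def : ∀ A B : {A : Finset G // A.Nonempty},
      ((∀ b ∈ B.1, r A.1 b) : Prop) → True := fun _ _ _ => trivial
  have hwd : ∀ (A B A' B' : {A : Finset G // A.Nonempty}), (scSetoid r h).r A A' → (scSetoid r h).r B B' →
      (fun A B : {A : Finset G // A.Nonempty} => ∀ b ∈ B.1, r A.1 b) A B =
        (fun A B : {A : Finset G // A.Nonempty} => ∀ b ∈ B.1, r A.1 b) A' B' := by
    rintro A B A' B' ⟨h1, h2⟩ ⟨h3, h4⟩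
    simp only [eq_iff_iff]
    constructor
    · intro hle b hb
      exact sc_cut h A'.2 A.2 h2 (sc_cut h A.2 B.2 hle (h3 b hb))
    · intro hle b hb
      exact sc_cut h A.2 A'.2 h1 (sc_cut h A'.2 B'.2 hle (h4 b hb))
  letI : SemilatticeInf S :=
    { lt := fun x y => Quotient.lift₂ (fun A B => ∀ b ∈ B.1, r A.1 b) hwd x y ∧
          ¬ Quotient.lift₂ (fun A B => ∀ b ∈ B.1, r A.1 b) hwd y x
      le := Quotient.lift₂ (fun A B => ∀ b ∈ B.1, r A.1 b) (by
        rintro A B A' B' ⟨h1, h2⟩ ⟨h3, h4⟩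
        simp only [eq_iff_iff]
        constructor
        · intro hle b hb
          exact sc_cut h A'.2 A.2 h2 (sc_cut h A.2 B.2 hle (h3 b hb))
        · intro hle b hb
          exact sc_cut h A.2 A'.2 h1 (sc_cut h A'.2 B'.2 hle (h4 b hb)))
      inf := Quotient.map₂ (fun A B => ⟨A.1 ∪ B.1, A.2.mono Finset.subset_union_left⟩) (by
        rintro A A' ⟨h1, h2⟩ B B' ⟨h3, h4⟩
        constructor
        · intro b hb
          rcases Finset.mem_union.mp hb with hb | hb
          · exact sc_cut h (A.2.mono Finset.subset_union_left) A.2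
              (fun x hx => sc_mem h (Finset.mem_union_left _ hx)) (h1 b hb)
          · exact sc_cut h (A.2.mono Finset.subset_union_left) B.2
              (fun x hx => sc_mem h (Finset.mem_union_right _ hx)) (h3 b hb)
        · intro b hb
          rcases Finset.mem_union.mp hb with hb | hb
          · exact sc_cut h (A'.2.mono Finset.subset_union_left) A'.2
              (fun x hx => sc_mem h (Finset.mem_union_left _ hx)) (h2 b hb)
          · exact sc_cut h (A'.2.mono Finset.subset_union_left) B'.2
              (fun x hx => sc_mem h (Finset.mem_union_right _ hx)) (h4 b hb))
      le_refl := by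
        rintro ⟨A⟩
        exact fun b hb => sc_mem h hb
      le_trans := by
        rintro ⟨A⟩ ⟨B⟩ ⟨C⟩ h1 h2 c hc
        exact sc_cut h A.2 B.2 h1 (h2 c hc)
      le_antisymm := by
        rintro ⟨A⟩ ⟨B⟩ h1 h2
        exact Quotient.sound ⟨fun b hb => h1 b hb, fun b hb => h2 b hb⟩
      inf_le_left := by
        rintro ⟨A⟩ ⟨B⟩ a ha
        exact sc_mem h (Finset.mem_union_left _ ha)
      inf_le_right := by
        rintro ⟨A⟩ ⟨B⟩ b hb
        exact sc_mem h (Finset.mem_union_right _ hb)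
      le_inf := by
        rintro ⟨A⟩ ⟨B⟩ ⟨C⟩ h1 h2 x hx
        rcases Finset.mem_union.mp hx with hx | hx
        · exact h1 x hx
        · exact h2 x hx }
  refine ⟨S, inferInstance, fun a => Quotient.mk _ ⟨{a}, Finset.singleton_nonempty a⟩, ?_⟩
  have key : ∀ (A : Finset G) (hA : A.Nonempty),
      A.inf' hA (fun a => (Quotient.mk (scSetoid r h) ⟨{a}, Finset.singleton_nonempty a⟩ : S))
        = Quotient.mk _ ⟨A, hA⟩ := by
    intro A hA
    induction hA using Finset.Nonempty.cons_induction with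
    | singleton a => rfl
    | cons a A ha hA' ih =>
      rw [Finset.inf'_cons (H := hA'), ih]
      have heq : ({a} : Finset G) ∪ A = Finset.cons a A ha := by
        rw [← Finset.insert_eq, Finset.cons_eq_insert]
      show Quotient.mk _ (⟨({a} : Finset G) ∪ A,
          (Finset.singleton_nonempty a).mono Finset.subset_union_left⟩ :
          {A : Finset G // A.Nonempty}) = _
      exact congrArg _ (Subtype.ext heq)
  intro A hA b
  rw [key A hA]
  show (∀ x ∈ ({b} : Finset G), r A x) ↔ r A b
  simp
end

section
/- Let G be a (partially) ordered commutative monoid and ⊳ a system of ideals for G. Then there exists a commutative monoid M equipped with a meet-semilattice order whose meet is compatible with addition (x + (y ⊓ z) = (x + y) ⊓ (x + z) for all x, y, z ∈ M), together with a monoid homomorphism f : G → M, such that for every nonempty finite subset A of G and every b ∈ G, the infimum ⊓_{a∈A} f(a) ≤ f(b) holds in M if and only if A ⊳ b. -/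
/-- A system of ideals for an ordered commutative monoid `G`: a single-conclusion
entailment relation that preserves the order and is equivariant. -/
structure IsIdealSystem {G : Type*} [DecidableEq G] [AddCommMonoid G] [PartialOrder G]
    [IsOrderedAddMonoid G]
    (r : Finset G → G → Prop) : Prop where
  toIsSCEntail : IsSCEntail r
  le_entail : ∀ ⦃a b : G⦄, a ≤ b → r {a} b
  equivariant : ∀ ⦃A : Finset G⦄ ⦃b : G⦄ (x : G), A.Nonempty → r A b →
    r (A.image (fun a => x + a)) (x + b)

namespace IdealSystemAux

open Pointwise

variable {G : Type u} [DecidableEq G] [AddCommMonoid G] [PartialOrder G] [IsOrderedAddMonoid G]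
variable {r : Finset G → G → Prop}

lemma mem_entail (h : IsIdealSystem r) {A : Finset G} {b : G} (hb : b ∈ A) : r A b := by
  have := h.toIsSCEntail.mono A (Finset.singleton_nonempty b) (h.toIsSCEntail.refl b)
  rwa [← Finset.insert_eq, Finset.insert_eq_self.2 hb] at this

lemma subset_entail (h : IsIdealSystem r) {A C : Finset G} {b : G} (hA : A.Nonempty)
    (hAC : A ⊆ C) (hr : r A b) : r C b := by
  have := h.toIsSCEntail.mono C hA hr
  rwa [Finset.union_eq_right.2 hAC] at this

lemma cut_aux (h : IsIdealSystem r) {A : Finset G} {b : G} (hA : A.Nonempty)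
    (B : Finset G) : (∀ c ∈ B, r A c) → r (A ∪ B) b → r A b := by
  induction B using Finset.induction_on with
  | empty => intro _ hr; rwa [Finset.union_empty] at hr
  | @insert c B hc ih =>
    intro hall hr
    apply ih (fun x hx => hall x (Finset.mem_insert_of_mem hx))
    have hABne : (A ∪ B).Nonempty := hA.elim fun a ha => ⟨a, Finset.mem_union_left _ ha⟩
    have h1 : r (A ∪ B) c :=
      h.toIsSCEntail.mono B hA (hall c (Finset.mem_insert_self c B))
    rw [Finset.union_insert] at hr
    exact h.toIsSCEntail.trans hABne h1 hr

lemma cut (h : IsIdealSystem r) {A B : Finset G} {b : G} (hA : A.Nonempty)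
    (hB : B.Nonempty) (hall : ∀ c ∈ B, r A c) (hr : r B b) : r A b := by
  apply cut_aux h hA B hall
  have := h.toIsSCEntail.mono A hB hr
  rwa [Finset.union_comm] at this

/-- Nonempty finite subsets of `G`. -/
def NE (G : Type u) [DecidableEq G] : Type u := {A : Finset G // A.Nonempty}

def sle (r : Finset G → G → Prop) (A B : NE G) : Prop := ∀ b ∈ B.1, r A.1 b

lemma sle_refl (h : IsIdealSystem r) (A : NE G) : sle r A A :=
  fun _ hb => mem_entail h hb

lemma sle_trans (h : IsIdealSystem r) {A B C : NE G} (hAB : sle r A B) (hBC : sle r B C) :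
    sle r A C :=
  fun c hc => cut h A.2 B.2 hAB (hBC c hc)

def idSetoid (r : Finset G → G → Prop) (h : IsIdealSystem r) : Setoid (NE G) where
  r A B := sle r A B ∧ sle r B A
  iseqv := ⟨fun A => ⟨sle_refl h A, sle_refl h A⟩,
    fun ⟨h1, h2⟩ => ⟨h2, h1⟩,
    fun ⟨h1, h2⟩ ⟨h3, h4⟩ => ⟨sle_trans h h1 h3, sle_trans h h4 h2⟩⟩

abbrev Q (r : Finset G → G → Prop) (h : IsIdealSystem r) : Type u := Quotient (idSetoid r h)

def nadd (A B : NE G) : NE G := ⟨A.1 + B.1, A.2.add B.2⟩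

def ninf (A B : NE G) : NE G :=
  ⟨A.1 ∪ B.1, A.2.elim fun a ha => ⟨a, Finset.mem_union_left _ ha⟩⟩

lemma sle_add (h : IsIdealSystem r) {A A' B B' : NE G} (h1 : sle r A A') (h2 : sle r B B') :
    sle r (nadd A B) (nadd A' B') := by
  rintro x hx
  obtain ⟨a', ha', b', hb', rfl⟩ := Finset.mem_add.1 (show x ∈ A'.1 + B'.1 from hx)
  have hABne : (A.1 + B.1).Nonempty := A.2.add B.2
  -- r ((a' + ·) '' B) (a' + b')
  have h3 : r (B.1.image (fun b => a' + b)) (a' + b') :=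
    h.equivariant a' B.2 (h2 b' hb')
  refine cut h hABne (B.2.image _) ?_ h3
  intro c hc
  rw [Finset.mem_image] at hc
  obtain ⟨b, hb, rfl⟩ := hc
  have h4 : r (A.1.image (fun a => b + a)) (b + a') := h.equivariant b A.2 (h1 a' ha')
  have h5 : A.1.image (fun a => b + a) ⊆ A.1 + B.1 := by
    intro x hx
    rw [Finset.mem_image] at hx
    obtain ⟨a, ha, rfl⟩ := hx
    exact Finset.mem_add.2 ⟨a, ha, b, hb, add_comm a b⟩
  have := subset_entail h (A.2.image _) h5 h4
  rwa [add_comm b a'] at this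

lemma add_cong (h : IsIdealSystem r) {A A' B B' : NE G}
    (hA : (idSetoid r h).r A A') (hB : (idSetoid r h).r B B') :
    (idSetoid r h).r (nadd A B) (nadd A' B') :=
  ⟨sle_add h hA.1 hB.1, sle_add h hA.2 hB.2⟩

lemma inf_cong (h : IsIdealSystem r) {A A' B B' : NE G}
    (hA : (idSetoid r h).r A A') (hB : (idSetoid r h).r B B') :
    (idSetoid r h).r (ninf A B) (ninf A' B') := by
  have key : ∀ {X X' Y Y' : NE G}, sle r X X' → sle r Y Y' → sle r (ninf X Y) (ninf X' Y') := by
    intro X X' Y Y' h1 h2 c hc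
    have hne : (X.1 ∪ Y.1).Nonempty := X.2.elim fun a ha => ⟨a, Finset.mem_union_left _ ha⟩
    rcases Finset.mem_union.1 hc with hc | hc
    · exact cut h hne X.2 (fun x hx => mem_entail h (Finset.mem_union_left _ hx)) (h1 c hc)
    · exact cut h hne Y.2 (fun x hx => mem_entail h (Finset.mem_union_right _ hx)) (h2 c hc)
  exact ⟨key hA.1 hB.1, key hA.2 hB.2⟩

def Qadd (r : Finset G → G → Prop) (h : IsIdealSystem r) : AddCommMonoid (Q r h) :=
  letI : Zero (Q r h) := ⟨Quotient.mk (idSetoid r h) ⟨{0}, Finset.singleton_nonempty 0⟩⟩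
  letI : Add (Q r h) := ⟨Quotient.map₂ nadd (fun _ _ hA _ _ hB => add_cong h hA hB)⟩
  { add := (· + ·)
    zero := 0
    nsmul := nsmulRec
    add_assoc := fun a b c =>
      Quotient.inductionOn₃ a b c fun A B C =>
        congrArg (Quotient.mk _) (Subtype.ext (add_assoc A.1 B.1 C.1))
    zero_add := fun a =>
      Quotient.inductionOn a fun A =>
        congrArg (Quotient.mk _) (Subtype.ext (zero_add A.1))
    add_zero := fun a =>
      Quotient.inductionOn a fun A =>
        congrArg (Quotient.mk _) (Subtype.ext (add_zero A.1))
    add_comm := fun a b =>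
      Quotient.inductionOn₂ a b fun A B =>
        congrArg (Quotient.mk _) (Subtype.ext (add_comm A.1 B.1)) }

def Qinf (r : Finset G → G → Prop) (h : IsIdealSystem r) : SemilatticeInf (Q r h) where
  le := Quotient.lift₂ (sle r) (fun A B A' B' hA hB => by
    apply propext
    constructor
    · exact fun hle => sle_trans h (sle_trans h hA.2 hle) hB.1
    · exact fun hle => sle_trans h (sle_trans h hA.1 hle) hB.2)
  le_refl a := Quotient.inductionOn a fun A => sle_refl h A
  le_trans a b c := Quotient.inductionOn₃ a b c fun A B C h1 h2 => sle_trans h h1 h2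
  le_antisymm a b := Quotient.inductionOn₂ a b fun A B h1 h2 => Quotient.sound ⟨h1, h2⟩
  inf := Quotient.map₂ ninf (fun _ _ hA _ _ hB => inf_cong h hA hB)
  inf_le_left a b := Quotient.inductionOn₂ a b fun A B x hx =>
    mem_entail h (Finset.mem_union_left _ hx)
  inf_le_right a b := Quotient.inductionOn₂ a b fun A B x hx =>
    mem_entail h (Finset.mem_union_right _ hx)
  le_inf a b c := Quotient.inductionOn₃ a b c fun A B C h1 h2 x hx =>
    (Finset.mem_union.1 hx).elim (h1 x) (h2 x)

end IdealSystemAux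

open Pointwise IdealSystemAux in
/-- A system of ideals for an ordered commutative monoid `G` generates a
meet-semilattice-ordered commutative monoid whose order reflects the relation. -/
theorem ideal_system_generates_meet_monoid {G : Type u} [DecidableEq G]
    [AddCommMonoid G] [PartialOrder G] [IsOrderedAddMonoid G] (r : Finset G → G → Prop) (h : IsIdealSystem r) :
    ∃ (M : Type u) (_ : AddCommMonoid M) (_ : SemilatticeInf M) (f : G → M),
      (∀ x y z : M, x + (y ⊓ z) = (x + y) ⊓ (x + z)) ∧
      (∀ x y : G, f (x + y) = f x + f y) ∧ f 0 = 0 ∧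
      ∀ (A : Finset G) (hA : A.Nonempty) (b : G),
        A.inf' hA f ≤ f b ↔ r A b := by
  classical
  letI : AddCommMonoid (Q r h) := Qadd r h
  letI : SemilatticeInf (Q r h) := Qinf r h
  refine ⟨Q r h, Qadd r h, Qinf r h,
    fun a => Quotient.mk (idSetoid r h) ⟨{a}, Finset.singleton_nonempty a⟩, ?_, ?_, ?_, ?_⟩
  · intro x y z
    refine Quotient.inductionOn₃ x y z fun X Y Z => ?_
    show Quotient.mk (idSetoid r h) (nadd X (ninf Y Z)) =
      Quotient.mk (idSetoid r h) (ninf (nadd X Y) (nadd X Z))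
    refine congrArg (Quotient.mk _) (Subtype.ext ?_)
    show X.1 + (Y.1 ∪ Z.1) = (X.1 + Y.1) ∪ (X.1 + Z.1)
    exact Finset.add_union
  · intro x y
    show Quotient.mk (idSetoid r h) ⟨{x + y}, _⟩ =
      Quotient.mk (idSetoid r h) (nadd ⟨{x}, Finset.singleton_nonempty x⟩
        ⟨{y}, Finset.singleton_nonempty y⟩)
    refine congrArg (Quotient.mk _) (Subtype.ext ?_)
    show ({x + y} : Finset G) = {x} + {y}
    rw [Finset.singleton_add_singleton]
  · rfl
  · have key : ∀ (A : Finset G) (hA : A.Nonempty),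
        A.inf' hA (fun a => Quotient.mk (idSetoid r h) ⟨{a}, Finset.singleton_nonempty a⟩) =
          Quotient.mk (idSetoid r h) ⟨A, hA⟩ := by
      intro A hA
      induction hA using Finset.Nonempty.cons_induction with
      | singleton a => rw [Finset.inf'_singleton]
      | cons a A ha hA ih =>
        rw [Finset.inf'_cons hA, ih]
        show Quotient.mk (idSetoid r h) (ninf ⟨{a}, Finset.singleton_nonempty a⟩ ⟨A, hA⟩) =
          Quotient.mk (idSetoid r h) ⟨Finset.cons a A ha, _⟩
        refine congrArg (Quotient.mk _) (Subtype.ext ?_)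
        show ({a} : Finset G) ∪ A = Finset.cons a A ha
        rw [Finset.cons_eq_insert, Finset.insert_eq]
    intro A hA b
    rw [key A hA]
    show sle r ⟨A, hA⟩ ⟨{b}, Finset.singleton_nonempty b⟩ ↔ r A b
    constructor
    · exact fun hle => hle b (Finset.mem_singleton_self b)
    · intro hr c hc
      rw [Finset.mem_singleton] at hc
      subst hc; exact hr
end

section
/- Let G be a (partially) ordered abelian group, ⊳ a system of ideals for G, and x ∈ G. Define the relation ⊳ₓ by A ⊳ₓ b :⟺ there exists a natural number p such that A ∪ (A + x) ∪ (A + 2x) ∪ ⋯ ∪ (A + px) ⊳ b. Then ⊳ₓ is a system of ideals for G, it is coarser than ⊳ (A ⊳ b implies A ⊳ₓ b), it satisfies {0} ⊳ₓ x, and it is the finest such: for every system of ideals ⊳' for G that is coarser than ⊳ and satisfies {0} ⊳' x, A ⊳ₓ b implies A ⊳' b. -/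
/-- The relation obtained from `r` by forcing `{0} ⊳ x`:
`A ⊳ₓ b` iff `A ∪ (A + x) ∪ ⋯ ∪ (A + p·x) ⊳ b` for some natural number `p`. -/
def forceRel {G : Type*} [DecidableEq G] [AddCommGroup G] [PartialOrder G] [IsOrderedAddMonoid G]
    (r : Finset G → G → Prop) (x : G) (A : Finset G) (b : G) : Prop :=
  ∃ p : ℕ, r ((Finset.range (p + 1)).biUnion fun k => A.image (fun a => a + k • x)) b

section Aux
variable {G : Type*} [DecidableEq G]

lemma sce_mono_subset {r : Finset G → G → Prop} (hr : IsSCEntail r)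
    {A B : Finset G} {b : G} (hA : A.Nonempty) (hAB : A ⊆ B) (hrA : r A b) : r B b := by
  have := hr.mono B hA hrA
  rwa [Finset.union_eq_right.mpr hAB] at this

lemma sce_cut {r : Finset G → G → Prop} (hr : IsSCEntail r)
    (B : Finset G) : ∀ {A : Finset G} {b : G}, A.Nonempty →
    (∀ c ∈ B, r A c) → r (A ∪ B) b → r A b := by
  induction B using Finset.induction_on with
  | empty => intro A b hA _ hh; rwa [Finset.union_empty] at hh
  | @insert c B hc ih =>
    intro A b hA hB hh
    apply ih hA (fun d hd => hB d (Finset.mem_insert_of_mem hd))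
    apply hr.trans (hA.mono Finset.subset_union_left)
      (hr.mono B hA (hB c (Finset.mem_insert_self c B)))
    rwa [Finset.union_insert] at hh

variable [AddCommGroup G] [PartialOrder G] [IsOrderedAddMonoid G]

def Sf (x : G) (A : Finset G) (p : ℕ) : Finset G :=
  (Finset.range (p + 1)).biUnion fun k => A.image (fun a => a + k • x)

lemma mem_Sf {x : G} {A : Finset G} {p : ℕ} {y : G} :
    y ∈ Sf x A p ↔ ∃ k ≤ p, ∃ a ∈ A, a + k • x = y := by
  simp only [Sf, Finset.mem_biUnion, Finset.mem_range, Finset.mem_image, Nat.lt_succ_iff]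

lemma Sf_nonempty {x : G} {A : Finset G} (hA : A.Nonempty) (p : ℕ) :
    (Sf x A p).Nonempty := by
  obtain ⟨a, ha⟩ := hA
  exact ⟨a + 0 • x, mem_Sf.mpr ⟨0, Nat.zero_le _, a, ha, rfl⟩⟩

lemma Sf_union (x : G) (A B : Finset G) (p : ℕ) :
    Sf x (A ∪ B) p = Sf x A p ∪ Sf x B p := by
  ext y
  simp only [Finset.mem_union, mem_Sf]
  constructor
  · rintro ⟨k, hk, a, ha | ha, rfl⟩
    · exact Or.inl ⟨k, hk, a, ha, rfl⟩
    · exact Or.inr ⟨k, hk, a, ha, rfl⟩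
  · rintro (⟨k, hk, a, ha, rfl⟩ | ⟨k, hk, a, ha, rfl⟩)
    · exact ⟨k, hk, a, Or.inl ha, rfl⟩
    · exact ⟨k, hk, a, Or.inr ha, rfl⟩

lemma Sf_mono {x : G} {A : Finset G} {p q : ℕ} (hpq : p ≤ q) :
    Sf x A p ⊆ Sf x A q := by
  intro y hy
  obtain ⟨k, hk, a, ha, rfl⟩ := mem_Sf.mp hy
  exact mem_Sf.mpr ⟨k, hk.trans hpq, a, ha, rfl⟩

lemma Sf_image (x y : G) (A : Finset G) (p : ℕ) :
    (Sf x A p).image (fun a => y + a) = Sf x (A.image (fun a => y + a)) p := by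
  ext z
  simp only [Finset.mem_image, mem_Sf]
  constructor
  · rintro ⟨w, ⟨k, hk, a, ha, rfl⟩, rfl⟩
    exact ⟨k, hk, y + a, ⟨a, ha, rfl⟩, by abel⟩
  · rintro ⟨k, hk, w, ⟨a, ha, rfl⟩, rfl⟩
    exact ⟨a + k • x, ⟨k, hk, a, ha, rfl⟩, by abel⟩

lemma Sf_shift {x : G} {A : Finset G} {p q k : ℕ} (hk : k ≤ q) :
    (Sf x A p).image (fun a => k • x + a) ⊆ Sf x A (p + q) := by
  intro z hz
  obtain ⟨w, hw, rfl⟩ := Finset.mem_image.mp hz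
  obtain ⟨j, hj, a, ha, rfl⟩ := mem_Sf.mp hw
  refine mem_Sf.mpr ⟨j + k, by omega, a, ha, ?_⟩
  rw [add_nsmul]; abel

end Aux

/-- Forcing the positivity of an element: `⊳ₓ` is a system of ideals, coarser than `⊳`,
satisfying `{0} ⊳ₓ x`, and it is the finest such. -/
theorem forcing_positivity {G : Type*} [DecidableEq G] [AddCommGroup G] [PartialOrder G] [IsOrderedAddMonoid G]
    (r : Finset G → G → Prop) (h : IsIdealSystem r) (x : G) :
    IsIdealSystem (forceRel r x) ∧
    (∀ (A : Finset G) (b : G), r A b → forceRel r x A b) ∧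
    forceRel r x {0} x ∧
    (∀ (r' : Finset G → G → Prop), IsIdealSystem r' →
      (∀ (A : Finset G) (b : G), r A b → r' A b) → r' {0} x →
      ∀ (A : Finset G) (b : G), A.Nonempty → forceRel r x A b → r' A b) := by
  have hE := h.toIsSCEntail
  have Sf_zero : ∀ A : Finset G, Sf x A 0 = A := by
    intro A; ext y; simp [mem_Sf, Nat.le_zero]
  refine ⟨⟨⟨?_, ?_, ?_⟩, ?_, ?_⟩, ?_, ?_, ?_⟩
  · -- refl
    intro a
    exact ⟨0, by rw [show ((Finset.range (0+1)).biUnion fun k => ({a} : Finset G).image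
      (fun a => a + k • x)) = Sf x {a} 0 from rfl, Sf_zero]; exact hE.refl a⟩
  · -- mono
    rintro A A' b hA ⟨p, hp⟩
    refine ⟨p, ?_⟩
    show r (Sf x (A ∪ A') p) b
    rw [Sf_union]
    exact hE.mono _ (Sf_nonempty hA p) hp
  · -- trans
    rintro A b c hA ⟨p, hp⟩ ⟨q, hq⟩
    refine ⟨p + q, ?_⟩
    show r (Sf x A (p + q)) b
    have hp' : r (Sf x A p) c := hp
    have hq' : r (Sf x (insert c A) q) b := hq
    have key : ∀ k ≤ q, r (Sf x A (p + q)) (k • x + c) := by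
      intro k hk
      have h1 := h.equivariant (k • x) (Sf_nonempty hA p) hp'
      exact sce_mono_subset hE ((Sf_nonempty hA p).image _) (Sf_shift hk) h1
    have hcut : ∀ d ∈ Sf x ({c} : Finset G) q, r (Sf x A (p + q)) d := by
      intro d hd
      obtain ⟨k, hk, a, ha, rfl⟩ := mem_Sf.mp hd
      obtain rfl : a = c := Finset.mem_singleton.mp ha
      rw [add_comm a (k • x)]
      exact key k hk
    apply sce_cut hE _ (Sf_nonempty hA (p + q)) hcut
    have hsub : Sf x (insert c A) q ⊆ Sf x A (p + q) ∪ Sf x ({c} : Finset G) q := by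
      intro y hy
      obtain ⟨k, hk, a, ha, rfl⟩ := mem_Sf.mp hy
      rcases Finset.mem_insert.mp ha with rfl | ha
      · exact Finset.mem_union_right _ (mem_Sf.mpr ⟨k, hk, a, Finset.mem_singleton_self a, rfl⟩)
      · exact Finset.mem_union_left _ (mem_Sf.mpr ⟨k, by omega, a, ha, rfl⟩)
    exact sce_mono_subset hE (Sf_nonempty (Finset.insert_nonempty c A) q) hsub hq'
  · -- le_entail
    intro a b hab
    refine ⟨0, ?_⟩
    show r (Sf x {a} 0) b
    rw [Sf_zero]
    exact h.le_entail hab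
  · -- equivariant
    rintro A b y hA ⟨p, hp⟩
    refine ⟨p, ?_⟩
    show r (Sf x (A.image (fun a => y + a)) p) (y + b)
    rw [← Sf_image]
    exact h.equivariant y (Sf_nonempty hA p) hp
  · -- coarser
    intro A b hab
    refine ⟨0, ?_⟩
    show r (Sf x A 0) b
    rw [Sf_zero]
    exact hab
  · -- {0} ⊳ₓ x
    refine ⟨1, ?_⟩
    show r (Sf x ({0} : Finset G) 1) x
    refine sce_mono_subset hE (Finset.singleton_nonempty x) ?_ (hE.refl x)
    intro y hy
    obtain rfl := Finset.mem_singleton.mp hy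
    exact mem_Sf.mpr ⟨1, le_refl 1, 0, Finset.mem_singleton_self 0, by simp⟩
  · -- finest
    rintro r' hr' hco h0 A b hA ⟨p, hp⟩
    have hp' : r (Sf x A p) b := hp
    have hE' := hr'.toIsSCEntail
    have step : ∀ (a : G) (k : ℕ), r' {a} (a + k • x) := by
      intro a k
      induction k with
      | zero => simpa using hE'.refl a
      | succ k ih =>
        have h1 := hr'.equivariant (a + k • x) (Finset.singleton_nonempty 0) h0
        have h2 : r' {a + k • x} (a + (k + 1) • x) := by
          have e1 : ({0} : Finset G).image (fun z => (a + k • x) + z) = {a + k • x} := by simp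
          have e2 : (a + k • x) + x = a + (k + 1) • x := by rw [succ_nsmul]; abel
          rwa [e1, e2] at h1
        exact hE'.trans (Finset.singleton_nonempty a) ih
          (sce_mono_subset hE' (Finset.singleton_nonempty _)
            (Finset.singleton_subset_iff.mpr (Finset.mem_insert_self _ _)) h2)
    have hAd : ∀ d ∈ Sf x A p, r' A d := by
      intro d hd
      obtain ⟨k, hk, a, ha, rfl⟩ := mem_Sf.mp hd
      exact sce_mono_subset hE' (Finset.singleton_nonempty a)
        (Finset.singleton_subset_iff.mpr ha) (step a k)
    have hb : r' (A ∪ Sf x A p) b :=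
      sce_mono_subset hE' (Sf_nonempty hA p) Finset.subset_union_right (hco _ _ hp')
    exact sce_cut hE' _ hA hAd hb
end

section
/- Let G be a (partially) ordered abelian group and ⊢ a regular entailment relation for G. If x₁, x₂, y₁, y₂ ∈ G satisfy x₁ + x₂ = y₁ + y₂, then {x₁, x₂} ⊢ {y₁, y₂}. -/
/-- An unbounded entailment relation on a set `G`: a relation between pairs of
nonempty finite subsets of `G` that is reflexive, monotone and transitive. -/
structure IsEntailRel {G : Type*} [DecidableEq G] (r : Finset G → Finset G → Prop) : Prop where
  refl : ∀ a : G, r {a} {a}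
  mono : ∀ ⦃A B : Finset G⦄ (A' B' : Finset G), A.Nonempty → B.Nonempty → r A B →
    r (A ∪ A') (B ∪ B')
  trans : ∀ ⦃A B : Finset G⦄ ⦃c : G⦄, A.Nonempty → B.Nonempty → r A (insert c B) →
    r (insert c A) B → r A B

/-- An equivariant entailment relation for an ordered abelian group `G`: an unbounded
entailment relation that preserves the order and is equivariant. -/
structure IsEquivEntailRel {G : Type*} [DecidableEq G] [AddCommGroup G] [PartialOrder G] [IsOrderedAddMonoid G]
    (r : Finset G → Finset G → Prop) : Prop where
  toIsEntailRel : IsEntailRel r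
  le_entail : ∀ ⦃a b : G⦄, a ≤ b → r {a} {b}
  equivariant : ∀ ⦃A B : Finset G⦄ (x : G), A.Nonempty → B.Nonempty → r A B →
    r (A.image (fun a => x + a)) (B.image (fun b => x + b))

/-- A regular entailment relation for an ordered abelian group `G`: an equivariant
entailment relation satisfying the regularity axiom
`{x + a, y + b} ⊢ {y + a, x + b}`. -/
structure IsRegularEntailRel {G : Type*} [DecidableEq G] [AddCommGroup G] [PartialOrder G] [IsOrderedAddMonoid G]
    (r : Finset G → Finset G → Prop) : Prop where
  toIsEquivEntailRel : IsEquivEntailRel r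
  regular : ∀ a b x y : G, r {x + a, y + b} {y + a, x + b}

/-- If `x₁ + x₂ = y₁ + y₂`, then `{x₁, x₂} ⊢ {y₁, y₂}` for any regular entailment
relation `⊢` for an ordered abelian group `G`. -/
theorem regular_entail_of_sum_eq {G : Type*} [DecidableEq G] [AddCommGroup G] [PartialOrder G] [IsOrderedAddMonoid G]
    (r : Finset G → Finset G → Prop) (h : IsRegularEntailRel r)
    (x₁ x₂ y₁ y₂ : G) (hsum : x₁ + x₂ = y₁ + y₂) :
    r {x₁, x₂} {y₁, y₂} := by
  have H := h.regular 0 (x₂ - y₁) x₁ y₁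
  have e1 : x₁ + 0 = x₁ := add_zero _
  have e2 : y₁ + (x₂ - y₁) = x₂ := by abel
  have e3 : y₁ + 0 = y₁ := add_zero _
  have e4 : x₁ + (x₂ - y₁) = y₂ := by rw [← add_sub_assoc, hsum]; abel
  rw [e1, e2, e3, e4] at H
  exact H
end

section
/- Let G be a (partially) ordered abelian group, ⊢ a regular entailment relation for G, A and B nonempty finite subsets of G, and x ∈ G. Then: (1) if A ∪ (A + x) ⊢ B and A ∪ (A − x) ⊢ B, then A ⊢ B; (2) A ∪ (A + x) ⊢ B holds if and only if A ⊢ B ∪ (B − x). -/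
section Helpers

variable {G : Type*} [DecidableEq G] [AddCommGroup G] [PartialOrder G] [IsOrderedAddMonoid G]
variable {r : Finset G → Finset G → Prop}

private lemma RE.mono (h : IsRegularEntailRel r) :
    ∀ ⦃A B : Finset G⦄ (A' B' : Finset G), A.Nonempty → B.Nonempty → r A B →
      r (A ∪ A') (B ∪ B') :=
  h.toIsEquivEntailRel.toIsEntailRel.mono

private lemma RE.trans (h : IsRegularEntailRel r) :
    ∀ ⦃A B : Finset G⦄ ⦃c : G⦄, A.Nonempty → B.Nonempty → r A (insert c B) →
      r (insert c A) B → r A B :=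
  h.toIsEquivEntailRel.toIsEntailRel.trans

/-- Weakening. -/
private lemma RE.wk (h : IsRegularEntailRel r) {A B A' B' : Finset G}
    (hA : A.Nonempty) (hB : B.Nonempty) (hr : r A B) (hAA : A ⊆ A') (hBB : B ⊆ B') :
    r A' B' := by
  have := RE.mono h A' B' hA hB hr
  rwa [Finset.union_eq_right.mpr hAA, Finset.union_eq_right.mpr hBB] at this

/-- Cutting a finite set on the right. -/
private lemma RE.cutR (h : IsRegularEntailRel r) (C : Finset G) :
    ∀ {X Y : Finset G}, X.Nonempty → Y.Nonempty → r X (Y ∪ C) →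
      (∀ c ∈ C, r (insert c X) Y) → r X Y := by
  induction C using Finset.induction_on with
  | empty => intro X Y _ _ hr _; simpa using hr
  | @insert c C hc ih =>
    intro X Y hX hY hr hall
    refine ih hX hY ?_ (fun d hd => hall d (Finset.mem_insert_of_mem hd))
    have h1 : r X (insert c (Y ∪ C)) := by rwa [Finset.union_insert] at hr
    have h2 : r (insert c X) (Y ∪ C) :=
      RE.wk h (Finset.insert_nonempty c X) hY (hall c (Finset.mem_insert_self c C))
        (Finset.Subset.refl _) Finset.subset_union_left
    exact RE.trans h hX (hY.inl) h1 h2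

/-- Cutting a finite set on the left. -/
private lemma RE.cutL (h : IsRegularEntailRel r) (C : Finset G) :
    ∀ {X Y : Finset G}, X.Nonempty → Y.Nonempty → r (X ∪ C) Y →
      (∀ c ∈ C, r X (insert c Y)) → r X Y := by
  induction C using Finset.induction_on with
  | empty => intro X Y _ _ hr _; simpa using hr
  | @insert c C hc ih =>
    intro X Y hX hY hr hall
    refine ih hX hY ?_ (fun d hd => hall d (Finset.mem_insert_of_mem hd))
    have h1 : r (insert c (X ∪ C)) Y := by rwa [Finset.union_insert] at hr
    have h2 : r (X ∪ C) (insert c Y) :=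
      RE.wk h hX (Finset.insert_nonempty c Y) (hall c (Finset.mem_insert_self c C))
        Finset.subset_union_left (Finset.Subset.refl _)
    exact RE.trans h (hX.inl) hY h2 h1

/-- `{c} ⊢ {c - x, c + x}`. -/
private lemma RE.freg (h : IsRegularEntailRel r) (c x : G) : r {c} {c - x, c + x} := by
  simpa [add_comm, sub_add_cancel] using h.regular (c - x) c x 0

/-- `{a, b - x} ⊢ {a - x, b}`. -/
private lemma RE.ereg (h : IsRegularEntailRel r) (a b x : G) : r {a, b - x} {a - x, b} := by
  simpa [neg_add_eq_sub] using h.regular a b 0 (-x)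

/-- `{d + x, c - x} ⊢ {d - x, c + x}`. -/
private lemma RE.dreg (h : IsRegularEntailRel r) (d c x : G) :
    r {d + x, c - x} {d - x, c + x} := by
  simpa [← sub_eq_add_neg, neg_add_eq_sub, add_comm] using h.regular d c x (-x)

/-- The key lemma: `A ∪ (A + x) ⊢ B` implies `A ⊢ B ∪ (B - x)`. -/
private lemma RE.core (h : IsRegularEntailRel r) {A B : Finset G}
    (hA : A.Nonempty) (hB : B.Nonempty) (x : G)
    (H : r (A ∪ A.image (fun a => a + x)) B) :
    r A (B ∪ B.image (fun b => b - x)) := by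
  set R : Finset G := B ∪ B.image (fun b => b - x) with hRdef
  have hRne : R.Nonempty := hB.inl
  have hBR : B ⊆ R := Finset.subset_union_left
  have hBxR : B.image (fun b => b - x) ⊆ R := Finset.subset_union_right
  -- the shifted hypothesis
  have H2 : r (A.image (fun a => a - x) ∪ A) (B.image (fun b => b - x)) := by
    have := h.toIsEquivEntailRel.equivariant (-x) (hA.inl) hB H
    have hf1 : (fun a : G => -x + a) = (fun a => a - x) := by funext a; abel
    have hf2 : ((fun a : G => -x + a) ∘ (fun a : G => a + x)) = id := by
      funext a; show -x + (a + x) = a; abel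
    rwa [Finset.image_union, Finset.image_image, hf2, Finset.image_id, hf1] at this
  -- the master induction
  have key : ∀ n : ℕ, ∀ P K : Finset G, P ⊆ A → K ⊆ A →
      (A \ P).card + (A \ K).card ≤ n →
      r (A ∪ P.image (fun a => a + x) ∪ K.image (fun a => a - x))
        (R ∪ (P \ K).image (fun a => a - x)) := by
    -- closures
    have closA : ∀ P K : Finset G, A ⊆ P →
        r (A ∪ P.image (fun a => a + x) ∪ K.image (fun a => a - x))
          (R ∪ (P \ K).image (fun a => a - x)) := by
      intro P K hAP
      refine RE.wk h (hA.inl) hB H ?_ (hBR.trans Finset.subset_union_left)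
      intro t ht
      rcases Finset.mem_union.mp ht with ht | ht
      · exact Finset.mem_union_left _ (Finset.mem_union_left _ ht)
      · exact Finset.mem_union_left _ (Finset.mem_union_right _
          (Finset.image_subset_image hAP ht))
    have closK : ∀ P K : Finset G, A ⊆ K →
        r (A ∪ P.image (fun a => a + x) ∪ K.image (fun a => a - x))
          (R ∪ (P \ K).image (fun a => a - x)) := by
      intro P K hAK
      refine RE.wk h (Finset.Nonempty.inr hA) (hB.image _) H2
        ?_ (hBxR.trans Finset.subset_union_left)
      intro t ht
      rcases Finset.mem_union.mp ht with ht | ht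
      · exact Finset.mem_union_right _ (Finset.image_subset_image hAK ht)
      · exact Finset.mem_union_left _ (Finset.mem_union_left _ ht)
    intro n
    induction n with
    | zero =>
      intro P K hP hK hcard
      have : (A \ P).card = 0 := by omega
      have hAP : A ⊆ P := by
        intro a ha
        by_contra hnot
        have hmem : a ∈ A \ P := Finset.mem_sdiff.mpr ⟨ha, hnot⟩
        rw [Finset.card_eq_zero.mp this] at hmem
        exact absurd hmem (Finset.notMem_empty a)
      exact closA P K hAP
    | succ n ih =>
      intro P K hP hK hcard
      by_cases hPA : A ⊆ P
      · exact closA P K hPA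
      by_cases hKA : A ⊆ K
      · exact closK P K hKA
      have hLne : (A ∪ P.image (fun a => a + x) ∪ K.image (fun a => a - x)).Nonempty :=
        hA.inl.inl
      have hRHSne : (R ∪ (P \ K).image (fun a => a - x)).Nonempty := hRne.inl
      by_cases hsplit : ∃ c ∈ A, c ∉ P ∧ c ∉ K
      · -- rule (c) : split sign of c
        obtain ⟨c, hcA, hcP, hcK⟩ := hsplit
        have hm1 : (A \ insert c P).card + (A \ K).card ≤ n := by
          have hsub : A \ insert c P ⊆ A \ P :=
            Finset.sdiff_subset_sdiff (Finset.Subset.refl A) (Finset.subset_insert c P)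
          have hlt : (A \ insert c P).card < (A \ P).card := by
            refine Finset.card_lt_card ((Finset.ssubset_iff_of_subset hsub).mpr
              ⟨c, Finset.mem_sdiff.mpr ⟨hcA, hcP⟩, by simp⟩)
          omega
        have hm2 : (A \ P).card + (A \ insert c K).card ≤ n := by
          have hsub : A \ insert c K ⊆ A \ K :=
            Finset.sdiff_subset_sdiff (Finset.Subset.refl A) (Finset.subset_insert c K)
          have hlt : (A \ insert c K).card < (A \ K).card := by
            refine Finset.card_lt_card ((Finset.ssubset_iff_of_subset hsub).mpr
              ⟨c, Finset.mem_sdiff.mpr ⟨hcA, hcK⟩, by simp⟩)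
          omega
        have s2 := ih (insert c P) K (Finset.insert_subset hcA hP) hK hm1
        have s3 := ih P (insert c K) hP (Finset.insert_subset hcA hK) hm2
        -- massage s2
        have eL2 : A ∪ (insert c P).image (fun a => a + x) ∪ K.image (fun a => a - x)
            = insert (c + x) (A ∪ P.image (fun a => a + x) ∪ K.image (fun a => a - x)) := by
          rw [Finset.image_insert]
          ext t
          simp only [Finset.mem_union, Finset.mem_insert]
          tauto
        have eR2 : (insert c P) \ K = insert c (P \ K) := by
          ext t
          simp only [Finset.mem_sdiff, Finset.mem_insert]
          constructor
          · rintro ⟨h1 | h1, h2⟩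
            · exact Or.inl h1
            · exact Or.inr ⟨h1, h2⟩
          · rintro (rfl | ⟨h1, h2⟩)
            · exact ⟨Or.inl rfl, hcK⟩
            · exact ⟨Or.inr h1, h2⟩
        rw [eL2, eR2, Finset.image_insert, Finset.union_insert] at s2
        -- massage s3
        have eL3 : A ∪ P.image (fun a => a + x) ∪ (insert c K).image (fun a => a - x)
            = insert (c - x) (A ∪ P.image (fun a => a + x) ∪ K.image (fun a => a - x)) := by
          rw [Finset.image_insert]
          ext t
          simp only [Finset.mem_union, Finset.mem_insert]
          tauto
        have eR3 : P \ insert c K = P \ K := by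
          ext t
          simp only [Finset.mem_sdiff, Finset.mem_insert]
          constructor
          · rintro ⟨h1, h2⟩
            exact ⟨h1, fun ht => h2 (Or.inr ht)⟩
          · rintro ⟨h1, h2⟩
            refine ⟨h1, ?_⟩
            rintro (rfl | ht)
            · exact hcP h1
            · exact h2 ht
        rw [eL3, eR3] at s3
        -- the split sequent
        have s1 : r (A ∪ P.image (fun a => a + x) ∪ K.image (fun a => a - x))
            (insert (c + x) (insert (c - x) (R ∪ (P \ K).image (fun a => a - x)))) := by
          refine RE.wk h (Finset.singleton_nonempty c) ⟨c - x, by simp⟩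
            (RE.freg h c x) ?_ ?_
          · simp only [Finset.singleton_subset_iff, Finset.mem_union]
            exact Or.inl (Or.inl hcA)
          · intro t ht
            rcases Finset.mem_insert.mp ht with rfl | ht
            · exact Finset.mem_insert_of_mem (Finset.mem_insert_self _ _)
            · rw [Finset.mem_singleton] at ht
              subst ht
              exact Finset.mem_insert_self _ _
        have t1 : r (A ∪ P.image (fun a => a + x) ∪ K.image (fun a => a - x))
            (insert (c - x) (R ∪ (P \ K).image (fun a => a - x))) :=
          RE.trans h hLne (Finset.insert_nonempty _ _) s1 s2
        exact RE.trans h hLne hRHSne t1 s3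
      · -- rule (d) : P ∪ K covers A
        push_neg at hsplit
        obtain ⟨c, hcA, hcP⟩ := Finset.not_subset.mp hPA
        obtain ⟨d, hdA, hdK⟩ := Finset.not_subset.mp hKA
        have hcK : c ∈ K := hsplit c hcA hcP
        have hdP : d ∈ P := by
          by_contra hdP
          exact hdK (hsplit d hdA hdP)
        have hm1 : (A \ insert c P).card + (A \ K).card ≤ n := by
          have hsub : A \ insert c P ⊆ A \ P :=
            Finset.sdiff_subset_sdiff (Finset.Subset.refl A) (Finset.subset_insert c P)
          have hlt : (A \ insert c P).card < (A \ P).card := by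
            refine Finset.card_lt_card ((Finset.ssubset_iff_of_subset hsub).mpr
              ⟨c, Finset.mem_sdiff.mpr ⟨hcA, hcP⟩, by simp⟩)
          omega
        have s2 := ih (insert c P) K (Finset.insert_subset hcA hP) hK hm1
        have eL2 : A ∪ (insert c P).image (fun a => a + x) ∪ K.image (fun a => a - x)
            = insert (c + x) (A ∪ P.image (fun a => a + x) ∪ K.image (fun a => a - x)) := by
          rw [Finset.image_insert]
          ext t
          simp only [Finset.mem_union, Finset.mem_insert]
          tauto
        have eR2 : (insert c P) \ K = P \ K := by
          ext t
          simp only [Finset.mem_sdiff, Finset.mem_insert]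
          constructor
          · rintro ⟨h1 | h1, h2⟩
            · exact absurd hcK (h1 ▸ h2)
            · exact ⟨h1, h2⟩
          · rintro ⟨h1, h2⟩
            exact ⟨Or.inr h1, h2⟩
        rw [eL2, eR2] at s2
        have s1 : r (A ∪ P.image (fun a => a + x) ∪ K.image (fun a => a - x))
            (insert (c + x) (R ∪ (P \ K).image (fun a => a - x))) := by
          refine RE.wk h ⟨d + x, by simp⟩ ⟨d - x, by simp⟩ (RE.dreg h d c x) ?_ ?_
          · intro t ht
            rcases Finset.mem_insert.mp ht with rfl | ht
            · exact Finset.mem_union_left _ (Finset.mem_union_right _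
                (Finset.mem_image_of_mem _ hdP))
            · rw [Finset.mem_singleton] at ht
              subst ht
              exact Finset.mem_union_right _ (Finset.mem_image_of_mem _ hcK)
          · intro t ht
            rcases Finset.mem_insert.mp ht with rfl | ht
            · refine Finset.mem_insert_of_mem (Finset.mem_union_right _ ?_)
              exact Finset.mem_image_of_mem _ (Finset.mem_sdiff.mpr ⟨hdP, hdK⟩)
            · rw [Finset.mem_singleton] at ht
              subst ht
              exact Finset.mem_insert_self _ _
        exact RE.trans h hLne hRHSne s1 s2
  have final := key ((A \ ∅).card + (A \ ∅).card) ∅ ∅ (Finset.empty_subset A)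
    (Finset.empty_subset A) le_rfl
  simpa using final

/-- Part (1). -/
private lemma RE.part1 (h : IsRegularEntailRel r) {A B : Finset G}
    (hA : A.Nonempty) (hB : B.Nonempty) (x : G)
    (H1 : r (A ∪ A.image (fun a => a + x)) B)
    (H2 : r (A ∪ A.image (fun a => a - x)) B) : r A B := by
  have hcore := RE.core h hA hB x H1
  refine RE.cutR h (B.image (fun b => b - x)) hA hB hcore ?_
  intro e he
  obtain ⟨b, hb, rfl⟩ := Finset.mem_image.mp he
  refine RE.cutL h (A.image (fun a => a - x)) (Finset.insert_nonempty _ _) hB ?_ ?_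
  · refine RE.wk h (hA.inl) hB H2 ?_ (Finset.Subset.refl B)
    intro t ht
    rcases Finset.mem_union.mp ht with ht | ht
    · exact Finset.mem_union_left _ (Finset.mem_insert_of_mem ht)
    · exact Finset.mem_union_right _ ht
  · intro e' he'
    obtain ⟨a, ha, rfl⟩ := Finset.mem_image.mp he'
    refine RE.wk h ⟨a, by simp⟩ ⟨a - x, by simp⟩ (RE.ereg h a b x) ?_ ?_
    · intro t ht
      rcases Finset.mem_insert.mp ht with rfl | ht
      · exact Finset.mem_insert_of_mem ha
      · rw [Finset.mem_singleton] at ht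
        subst ht
        exact Finset.mem_insert_self _ _
    · intro t ht
      rcases Finset.mem_insert.mp ht with rfl | ht
      · exact Finset.mem_insert_self _ _
      · rw [Finset.mem_singleton] at ht
        subst ht
        exact Finset.mem_insert_of_mem hb

/-- The dual (negated, side-swapped) relation. -/
private def RE.negRel (r : Finset G → Finset G → Prop) : Finset G → Finset G → Prop :=
  fun C D => r (D.image (fun d => -d)) (C.image (fun c => -c))

private lemma RE.negRel_regular (h : IsRegularEntailRel r) :
    IsRegularEntailRel (RE.negRel r) := by
  refine ⟨⟨⟨?_, ?_, ?_⟩, ?_, ?_⟩, ?_⟩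
  · intro a
    simpa [RE.negRel] using h.toIsEquivEntailRel.toIsEntailRel.refl (-a)
  · intro A B A' B' hA hB hr
    unfold RE.negRel at *
    rw [Finset.image_union, Finset.image_union]
    exact RE.mono h _ _ (hB.image _) (hA.image _) hr
  · intro A B c hA hB h1 h2
    unfold RE.negRel at *
    rw [Finset.image_insert] at h1 h2
    exact RE.trans h (hB.image _) (hA.image _) h2 h1
  · intro a b hab
    simpa [RE.negRel] using h.toIsEquivEntailRel.le_entail (neg_le_neg hab)
  · intro A B x hA hB hr
    unfold RE.negRel at *
    have e : ∀ S : Finset G, (S.image (fun a => x + a)).image (fun a : G => -a)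
        = (S.image (fun a : G => -a)).image (fun a => -x + a) := by
      intro S
      rw [Finset.image_image, Finset.image_image]
      congr 1
      funext a
      simp [neg_add, add_comm]
    rw [e, e]
    exact h.toIsEquivEntailRel.equivariant (-x) (hB.image _) (hA.image _) hr
  · intro a b x y
    unfold RE.negRel
    simp only [Finset.image_insert, Finset.image_singleton]
    have h0 := h.regular (-y) (-x) (-a) (-b)
    rw [Finset.pair_comm (-b + -y) (-a + -x)] at h0
    simpa using h0

/-- The converse direction: `A ⊢ B ∪ (B - x)` implies `A ∪ (A + x) ⊢ B`. -/
private lemma RE.coreRev (h : IsRegularEntailRel r) {A B : Finset G}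
    (hA : A.Nonempty) (hB : B.Nonempty) (x : G)
    (H : r A (B ∪ B.image (fun b => b - x))) :
    r (A ∪ A.image (fun a => a + x)) B := by
  have hd := RE.negRel_regular h
  have dneg : ∀ S : Finset G, (S.image (fun a : G => -a)).image (fun a : G => -a) = S := by
    intro S
    rw [Finset.image_image]
    simp
  have hprem : RE.negRel r
      (B.image (fun b => -b) ∪ (B.image (fun b => -b)).image (fun a => a + x))
      (A.image (fun a => -a)) := by
    unfold RE.negRel
    rw [Finset.image_union, dneg, dneg]
    have e : ((B.image (fun b : G => -b)).image (fun a => a + x)).image (fun a : G => -a)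
        = B.image (fun b => b - x) := by
      rw [Finset.image_image, Finset.image_image]
      congr 1
      funext b
      simp [sub_eq_add_neg]
      abel
    rw [e]
    exact H
  have hc := RE.core hd (hB.image _) (hA.image _) x hprem
  unfold RE.negRel at hc
  rw [Finset.image_union, dneg, dneg] at hc
  have e : ((A.image (fun a : G => -a)).image (fun b => b - x)).image (fun a : G => -a)
      = A.image (fun a => a + x) := by
    rw [Finset.image_image, Finset.image_image]
    congr 1
    funext a
    simp [sub_eq_add_neg]
    abel
  rw [e] at hc
  exact hc

end Helpers

/-- For a regular entailment relation: (1) if `A ∪ (A + x) ⊢ B` and `A ∪ (A − x) ⊢ B`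
then `A ⊢ B`; (2) `A ∪ (A + x) ⊢ B` if and only if `A ⊢ B ∪ (B − x)`. -/
theorem regular_entail_shift {G : Type*} [DecidableEq G] [AddCommGroup G] [PartialOrder G] [IsOrderedAddMonoid G]
    (r : Finset G → Finset G → Prop) (h : IsRegularEntailRel r)
    (A B : Finset G) (hA : A.Nonempty) (hB : B.Nonempty) (x : G) :
    (r (A ∪ A.image (fun a => a + x)) B → r (A ∪ A.image (fun a => a - x)) B → r A B) ∧
    (r (A ∪ A.image (fun a => a + x)) B ↔ r A (B ∪ B.image (fun b => b - x))) := by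
  constructor
  · exact fun H1 H2 => RE.part1 h hA hB x H1 H2
  · exact ⟨fun H => RE.core h hA hB x H, fun H => RE.coreRev h hA hB x H⟩
end

section
/- Let G be a (partially) ordered abelian group and ⊢ a regular entailment relation for G. For all a, x ∈ G and natural numbers p ≤ q, the entailment {a, a + q·x} ⊢ {a + p·x} holds (where n·x denotes the n-fold sum of x). -/
/-- For a regular entailment relation and natural numbers `p ≤ q`:
`{a, a + q·x} ⊢ {a + p·x}`. -/
theorem regular_entail_nsmul {G : Type*} [DecidableEq G] [AddCommGroup G] [PartialOrder G] [IsOrderedAddMonoid G]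
    (r : Finset G → Finset G → Prop) (h : IsRegularEntailRel r)
    (a x : G) (p q : ℕ) (hpq : p ≤ q) :
    r {a, a + q • x} {a + p • x} := by
  induction q using Nat.strong_induction_on generalizing a p with
  | _ q IH =>
  have E := h.toIsEquivEntailRel.toIsEntailRel
  rcases Nat.eq_zero_or_pos p with hp | hp
  · subst hp
    have h0 := E.mono {a + q • x} (∅ : Finset G) (Finset.singleton_nonempty _) (Finset.singleton_nonempty _) (E.refl a)
    simp only [← Finset.insert_eq, Finset.union_empty] at h0
    simpa using h0
  rcases eq_or_lt_of_le hpq with hq | hq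
  · subst hq
    have h0 := E.mono {a} (∅ : Finset G) (Finset.singleton_nonempty _) (Finset.singleton_nonempty _) (E.refl (a + p • x))
    simp only [← Finset.insert_eq, Finset.union_empty] at h0
    rwa [Finset.pair_comm] at h0
  set c := a + (q - p) • x with hc
  have h1 : r {a, a + q • x} (insert c {a + p • x}) := by
    have hr := h.regular a (a + p • x) 0 ((q - p) • x)
    have e2 : (q - p) • x + (a + p • x) = a + q • x := by
      have hn : p + (q - p) = q := by omega
      rw [add_comm, add_assoc, ← add_nsmul, hn]
    have e3 : (q - p) • x + a = c := add_comm _ _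
    rw [zero_add, zero_add, e2, e3] at hr
    exact hr
  have h2 : r (insert c {a, a + q • x}) {a + p • x} := by
    by_cases hcase : p ≤ q - p
    · have ih := IH (q - p) (by omega) a p hcase
      have h0 := E.mono {a + q • x} (∅ : Finset G) (Finset.insert_nonempty _ _) (Finset.singleton_nonempty _) ih
      rw [Finset.union_empty] at h0
      have hs : ({a, a + (q - p) • x} : Finset G) ∪ {a + q • x}
          = insert c {a, a + q • x} := by
        ext t; simp [hc]; tauto
      rwa [hs] at h0
    · have ih := IH p hq c (p - (q - p)) (by omega)
      have e5 : c + p • x = a + q • x := by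
        have hn : q - p + p = q := by omega
        rw [hc, add_assoc, ← add_nsmul, hn]
      have e6 : c + (p - (q - p)) • x = a + p • x := by
        have hn : q - p + (p - (q - p)) = p := by omega
        rw [hc, add_assoc, ← add_nsmul, hn]
      rw [e5, e6] at ih
      have h0 := E.mono {a} (∅ : Finset G) (Finset.insert_nonempty _ _) (Finset.singleton_nonempty _) ih
      rw [Finset.union_empty] at h0
      have hs : ({c, a + q • x} : Finset G) ∪ {a} = insert c {a, a + q • x} := by
        ext t; simp; tauto
      rwa [hs] at h0
  exact E.trans (Finset.insert_nonempty _ _) (Finset.singleton_nonempty _) h1 h2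
end

section
/- Let G be a (partially) ordered abelian group, ⊢ a regular entailment relation for G, A and B nonempty finite subsets of G, x ∈ G, and p ≤ q natural numbers. If A ∪ (A + p·x) ∪ (A + q·x) ⊢ B, then A ∪ (A + q·x) ⊢ B. In particular, if A ∪ (A + p·x) ⊢ B, then A ∪ (A + q·x) ⊢ B. -/
private lemma regular_shift {G : Type*} [DecidableEq G] [AddCommGroup G] [PartialOrder G] [IsOrderedAddMonoid G]
    {r : Finset G → Finset G → Prop} (h : IsRegularEntailRel r) (c d w : G) :
    r {c, d} {c + w, d - w} := by
  have h1 := h.regular c (d - w) 0 w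
  have e1 : (0:G) + c = c := zero_add c
  have e2 : w + (d - w) = d := by abel
  have e3 : w + c = c + w := add_comm _ _
  have e4 : (0:G) + (d - w) = d - w := zero_add _
  rw [e1, e2, e3, e4] at h1
  exact h1

private lemma pair_entail_key {G : Type*} [DecidableEq G] [AddCommGroup G] [PartialOrder G] [IsOrderedAddMonoid G]
    {r : Finset G → Finset G → Prop} (h : IsRegularEntailRel r) :
    ∀ q p : ℕ, p ≤ q → ∀ a x : G, r {a, a + q • x} {a + p • x} := by
  intro q
  induction q using Nat.strong_induction_on with
  | _ q IH =>
    intro p hpq a x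
    have E := h.toIsEquivEntailRel.toIsEntailRel
    rcases Nat.eq_zero_or_pos p with hp0 | hp0
    · subst hp0
      simp only [zero_smul, add_zero]
      have h1 := E.mono {a + q • x} ∅ (Finset.singleton_nonempty a)
        (Finset.singleton_nonempty a) (E.refl a)
      rw [Finset.union_empty, ← Finset.insert_eq] at h1
      exact h1
    rcases eq_or_lt_of_le hpq with rfl | hlt
    · have h1 := E.mono {a} ∅ (Finset.singleton_nonempty _) (Finset.singleton_nonempty _)
        (E.refl (a + p • x))
      have e : ({a + p • x} ∪ {a} : Finset G) = {a, a + p • x} := by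
        ext t; simp [or_comm]
      rw [Finset.union_empty, e] at h1
      exact h1
    -- 0 < p < q
    have nsum : ∀ m n : ℕ, a + m • x + n • x = a + (m + n) • x := by
      intro m n; rw [add_assoc, ← add_nsmul]
    have esub : (a + q • x) - p • x = a + (q - p) • x := by
      rw [eq_comm, eq_sub_iff_add_eq, nsum, Nat.sub_add_cancel hpq]
    have step := regular_shift h a (a + q • x) (p • x)
    rw [esub] at step
    have step' : r {a, a + q • x} (insert (a + (q - p) • x) {a + p • x}) := by
      have e : ({a + p • x, a + (q - p) • x} : Finset G)
          = insert (a + (q - p) • x) {a + p • x} := Finset.pair_comm _ _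
      rw [e] at step; exact step
    have h2 : r (insert (a + (q - p) • x) {a, a + q • x}) {a + p • x} := by
      rcases le_or_gt p (q - p) with hc | hc
      · have ih := IH (q - p) (by omega) p hc a x
        have h1 := E.mono {a + q • x} ∅ (by simp) (Finset.singleton_nonempty _) ih
        rw [Finset.union_empty] at h1
        have e : ({a, a + (q - p) • x} ∪ {a + q • x} : Finset G)
            = insert (a + (q - p) • x) {a, a + q • x} := by
          ext t; simp; tauto
        rw [e] at h1; exact h1
      · have ih := IH p hlt (2 * p - q) (by omega) (a + (q - p) • x) x
        rw [nsum, nsum] at ih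
        have e1 : q - p + p = q := by omega
        have e2 : q - p + (2 * p - q) = p := by omega
        rw [e1, e2] at ih
        have h1 := E.mono {a} ∅ (by simp) (Finset.singleton_nonempty _) ih
        rw [Finset.union_empty] at h1
        have e : ({a + (q - p) • x, a + q • x} ∪ {a} : Finset G)
            = insert (a + (q - p) • x) {a, a + q • x} := by
          ext t; simp; tauto
        rw [e] at h1; exact h1
    exact E.trans (by simp) (Finset.singleton_nonempty _) step' h2

/-- For a regular entailment relation and natural numbers `p ≤ q`:
if `A ∪ (A + p·x) ∪ (A + q·x) ⊢ B` then `A ∪ (A + q·x) ⊢ B`; in particular,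
if `A ∪ (A + p·x) ⊢ B` then `A ∪ (A + q·x) ⊢ B`. -/
theorem regular_entail_increase_step {G : Type*} [DecidableEq G] [AddCommGroup G] [PartialOrder G] [IsOrderedAddMonoid G]
    (r : Finset G → Finset G → Prop) (h : IsRegularEntailRel r)
    (A B : Finset G) (hA : A.Nonempty) (hB : B.Nonempty) (x : G) (p q : ℕ) (hpq : p ≤ q) :
    (r (A ∪ A.image (fun a => a + p • x) ∪ A.image (fun a => a + q • x)) B →
      r (A ∪ A.image (fun a => a + q • x)) B) ∧
    (r (A ∪ A.image (fun a => a + p • x)) B → r (A ∪ A.image (fun a => a + q • x)) B) := by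
  have E := h.toIsEquivEntailRel.toIsEntailRel
  set Ap := A.image (fun a => a + p • x) with hAp
  set Aq := A.image (fun a => a + q • x) with hAq
  have cut : ∀ C : Finset G, C ⊆ Ap → r (A ∪ Aq ∪ C) B → r (A ∪ Aq) B := by
    intro C
    induction C using Finset.induction_on with
    | empty => intro _ hr; rwa [Finset.union_empty] at hr
    | @insert c C hc IH =>
      intro hsub hr
      have hcAp : c ∈ Ap := hsub (Finset.mem_insert_self c C)
      rw [hAp, Finset.mem_image] at hcAp
      obtain ⟨a, ha, rfl⟩ := hcAp
      have key := pair_entail_key h q p hpq a x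
      have h1 := E.mono (A ∪ Aq ∪ C) B (by simp) (Finset.singleton_nonempty _) key
      have e1 : ({a, a + q • x} : Finset G) ∪ (A ∪ Aq ∪ C) = A ∪ Aq ∪ C := by
        apply Finset.union_eq_right.mpr
        intro t ht
        rcases Finset.mem_insert.mp ht with rfl | ht
        · exact Finset.mem_union_left _ (Finset.mem_union_left _ ha)
        · rcases Finset.mem_singleton.mp ht with rfl
          exact Finset.mem_union_left _ (Finset.mem_union_right _
            (Finset.mem_image_of_mem _ ha))
      have e2 : ({a + p • x} : Finset G) ∪ B = insert (a + p • x) B :=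
        (Finset.insert_eq _ _).symm
      rw [e1, e2] at h1
      have e3 : A ∪ Aq ∪ insert (a + p • x) C = insert (a + p • x) (A ∪ Aq ∪ C) := by
        ext t; simp; try tauto
      rw [e3] at hr
      obtain ⟨a0, ha0⟩ := hA
      have h4 : r (A ∪ Aq ∪ C) B :=
        E.trans ⟨a0, by simp [ha0]⟩ hB h1 hr
      exact IH (fun t ht => hsub (Finset.mem_insert_of_mem ht)) h4
  have part1 : r (A ∪ Ap ∪ Aq) B → r (A ∪ Aq) B := by
    intro hr
    apply cut Ap (le_refl _)
    have e : A ∪ Ap ∪ Aq = A ∪ Aq ∪ Ap := by ext t; simp; tauto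
    rwa [e] at hr
  refine ⟨part1, fun hr => part1 ?_⟩
  obtain ⟨a0, ha0⟩ := hA
  have h1 := E.mono Aq B ⟨a0, by simp [ha0]⟩ hB hr
  rwa [Finset.union_self] at h1
end

section
/- Let G be a (partially) ordered abelian group, ⊢ a regular entailment relation for G, and x ∈ G. Define A ⊢ₓ B :⟺ there exists a natural number p such that A ∪ (A + p·x) ⊢ B. Then ⊢ₓ is a regular entailment relation for G, it is coarser than ⊢, it satisfies {0} ⊢ₓ {x}, and it is the finest equivariant entailment relation with these properties: every equivariant entailment relation ⊢' for G that is coarser than ⊢ and satisfies {0} ⊢' {x} is coarser than ⊢ₓ. -/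
/-- The relation obtained from a regular entailment relation `⊢` by forcing `{0} ⊢ {x}`:
`A ⊢ₓ B` iff `A ∪ (A + p·x) ⊢ B` for some natural number `p`. -/
def forceEntail {G : Type*} [DecidableEq G] [AddCommGroup G] [PartialOrder G] [IsOrderedAddMonoid G]
    (r : Finset G → Finset G → Prop) (x : G) (A B : Finset G) : Prop :=
  ∃ p : ℕ, r (A ∪ A.image (fun a => a + p • x)) B

set_option linter.unusedSectionVars false
set_option linter.unreachableTactic false
set_option linter.unusedTactic false
set_option linter.unnecessarySeqFocus false

namespace ForcingAux

variable {G : Type*} [DecidableEq G] [AddCommGroup G] [PartialOrder G] [IsOrderedAddMonoid G]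
variable {r : Finset G → Finset G → Prop}

lemma mono' (E : IsEntailRel r) {A B A' B' : Finset G} (hA : A.Nonempty) (hB : B.Nonempty)
    (hr : r A B) (hA' : A ⊆ A') (hB' : B ⊆ B') : r A' B' := by
  have := E.mono A' B' hA hB hr
  rwa [Finset.union_eq_right.mpr hA', Finset.union_eq_right.mpr hB'] at this

lemma leftCut (E : IsEntailRel r) {X B : Finset G} (hX : X.Nonempty) (hB : B.Nonempty)
    (C : Finset G) (hside : ∀ c ∈ C, r X (insert c B)) (hmain : r (X ∪ C) B) : r X B := by
  induction C using Finset.induction_on with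
  | empty => simpa using hmain
  | @insert c C hc ih =>
    refine ih (fun d hd => hside d (Finset.mem_insert_of_mem hd)) ?_
    refine E.trans (c := c) (hX.mono Finset.subset_union_left) hB ?_ ?_
    · exact mono' E hX (Finset.insert_nonempty _ _) (hside c (Finset.mem_insert_self c C))
        Finset.subset_union_left (Finset.Subset.refl _)
    · have hset : insert c (X ∪ C) = X ∪ insert c C := by ext y; simp <;> tauto
      rwa [hset]

lemma rightCut (E : IsEntailRel r) {X B : Finset G} (hX : X.Nonempty) (hB : B.Nonempty)
    (D : Finset G) (hside : ∀ d ∈ D, r (insert d X) B) (hmain : r X (B ∪ D)) : r X B := by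
  induction D using Finset.induction_on with
  | empty => simpa using hmain
  | @insert d D hd ih =>
    refine ih (fun e he => hside e (Finset.mem_insert_of_mem he)) ?_
    refine E.trans (c := d) hX (hB.mono Finset.subset_union_left) ?_ ?_
    · have hset : insert d (B ∪ D) = B ∪ insert d D := by ext y; simp <;> tauto
      rwa [← hset] at hmain
    · exact mono' E (Finset.insert_nonempty _ _) hB (hside d (Finset.mem_insert_self d D))
        (Finset.Subset.refl _) Finset.subset_union_left

/-- The key "Euclidean" lemma: `{a - q•x, a + t•x} ⊢ {a}`. -/
lemma Glem (h : IsRegularEntailRel r) (x : G) :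
    ∀ n q t : ℕ, q + t ≤ n → ∀ a : G, r {a - q • x, a + t • x} {a} := by
  have E := h.toIsEquivEntailRel.toIsEntailRel
  intro n
  induction n with
  | zero =>
    intro q t hqt a
    have hq : q = 0 := by omega
    have ht : t = 0 := by omega
    subst hq; subst ht
    simpa [zero_nsmul] using E.refl a
  | succ n ih =>
    intro q t hqt a
    rcases Nat.eq_zero_or_pos q with hq | hq
    · subst hq
      have : ({a} : Finset G) ⊆ {a - (0:ℕ) • x, a + t • x} := by
        intro y hy; simp at hy; simp [hy, zero_nsmul]
      exact mono' E ⟨a, Finset.mem_singleton_self a⟩ ⟨a, Finset.mem_singleton_self a⟩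
        (E.refl a) this (Finset.Subset.refl _)
    rcases Nat.eq_zero_or_pos t with ht | ht
    · subst ht
      have : ({a} : Finset G) ⊆ {a - q • x, a + (0:ℕ) • x} := by
        intro y hy; simp at hy; simp [hy, zero_nsmul]
      exact mono' E ⟨a, Finset.mem_singleton_self a⟩ ⟨a, Finset.mem_singleton_self a⟩
        (E.refl a) this (Finset.Subset.refl _)
    rcases le_or_gt t q with hle | hlt
    · -- cut with d = a - (q - t) • x
      have key : r {a - q • x, a + t • x} {a, a - (q - t) • x} := by
        have reg := h.regular a (a + t • x) (-(q • x)) 0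
        have e1 : -(q • x) + a = a - q • x := by abel
        have e2 : (0:G) + (a + t • x) = a + t • x := zero_add _
        have e3 : (0:G) + a = a := zero_add _
        have e4 : -(q • x) + (a + t • x) = a - (q - t) • x := by
          have hqt' : q • x = (q - t) • x + t • x := by
            rw [← add_nsmul, Nat.sub_add_cancel hle]
          rw [hqt']; abel
        rwa [e1, e2, e3, e4] at reg
      have prem2 : r (insert (a - (q - t) • x) {a - q • x, a + t • x}) {a} := by
        refine mono' E ?_ ⟨a, Finset.mem_singleton_self a⟩ (ih (q - t) t (by omega) a) ?_
          (Finset.Subset.refl _)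
        · exact ⟨a + t • x, by simp⟩
        · intro y hy
          simp only [Finset.mem_insert, Finset.mem_singleton] at hy ⊢
          tauto
      refine E.trans (c := a - (q - t) • x) ⟨a + t • x, by simp⟩
        ⟨a, Finset.mem_singleton_self a⟩ ?_ prem2
      rwa [Finset.pair_comm a (a - (q - t) • x)] at key
    · -- cut with d = a + (t - q) • x
      have key : r {a - q • x, a + t • x} {a, a + (t - q) • x} := by
        have reg := h.regular a (a - q • x) (t • x) 0
        have e1 : t • x + a = a + t • x := by abel
        have e2 : (0:G) + (a - q • x) = a - q • x := zero_add _
        have e3 : (0:G) + a = a := zero_add _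
        have e4 : t • x + (a - q • x) = a + (t - q) • x := by
          have hqt' : t • x = (t - q) • x + q • x := by
            rw [← add_nsmul, Nat.sub_add_cancel hlt.le]
          rw [hqt']; abel
        rw [e1, e2, e3, e4] at reg
        rwa [Finset.pair_comm (a + t • x) (a - q • x)] at reg
      have prem2 : r (insert (a + (t - q) • x) {a - q • x, a + t • x}) {a} := by
        refine mono' E ?_ ⟨a, Finset.mem_singleton_self a⟩ (ih q (t - q) (by omega) a) ?_
          (Finset.Subset.refl _)
        · exact ⟨a - q • x, by simp⟩
        · intro y hy
          simp only [Finset.mem_insert, Finset.mem_singleton] at hy ⊢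
          tauto
      refine E.trans (c := a + (t - q) • x) ⟨a - q • x, by simp⟩
        ⟨a, Finset.mem_singleton_self a⟩ ?_ prem2
      rwa [Finset.pair_comm a (a + (t - q) • x)] at key

/-- `{a, a + s•x} ⊢ {a + q•x}` for `q ≤ s`. -/
lemma Klem (h : IsRegularEntailRel r) (x : G) (q s : ℕ) (hqs : q ≤ s) (a : G) :
    r {a, a + s • x} {a + q • x} := by
  have := Glem h x (q + (s - q)) q (s - q) le_rfl (a + q • x)
  have e1 : a + q • x - q • x = a := add_sub_cancel_right a _
  have e2 : a + q • x + (s - q) • x = a + s • x := by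
    rw [add_assoc, ← add_nsmul, Nat.add_sub_cancel' hqs]
  rwa [e1, e2] at this

end ForcingAux

namespace ForcingAux2
open ForcingAux
variable {G : Type*} [DecidableEq G] [AddCommGroup G] [PartialOrder G] [IsOrderedAddMonoid G]
variable {r : Finset G → Finset G → Prop}

/-- exponent monotonicity -/
lemma Mstep (h : IsRegularEntailRel r) (x : G) {A B : Finset G} (hA : A.Nonempty)
    (hB : B.Nonempty) (p k : ℕ) (hr : r (A ∪ A.image (fun a => a + p • x)) B) :
    r (A ∪ A.image (fun a => a + (p + k) • x)) B := by
  have E := h.toIsEquivEntailRel.toIsEntailRel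
  refine leftCut E (hA.mono Finset.subset_union_left) hB (A.image (fun a => a + p • x)) ?_ ?_
  · intro d hd
    obtain ⟨a, ha, rfl⟩ := Finset.mem_image.mp hd
    have hk := Klem h x p (p + k) (by omega) a
    refine mono' E ⟨a, by simp⟩ ⟨_, Finset.mem_singleton_self _⟩ hk ?_
      (Finset.singleton_subset_iff.mpr (Finset.mem_insert_self _ _))
    intro y hy
    simp only [Finset.mem_insert, Finset.mem_singleton] at hy
    rcases hy with rfl | rfl
    · exact Finset.mem_union_left _ ha
    · exact Finset.mem_union_right _ (Finset.mem_image_of_mem _ ha)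
  · refine mono' E (hA.mono Finset.subset_union_left) hB hr ?_ (Finset.Subset.refl _)
    intro y hy
    simp only [Finset.mem_union, Finset.mem_image] at hy ⊢
    tauto

lemma shiftE (hE : IsEquivEntailRel r) (t : G) {A B : Finset G} (hA : A.Nonempty)
    (hB : B.Nonempty) (hr : r A B) :
    r (A.image (fun a => a + t)) (B.image (fun b => b + t)) := by
  have := hE.equivariant t hA hB hr
  have eA : A.image (fun a => t + a) = A.image (fun a => a + t) :=
    Finset.image_congr (fun a _ => add_comm t a)
  have eB : B.image (fun b => t + b) = B.image (fun b => b + t) :=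
    Finset.image_congr (fun b _ => add_comm t b)
  rwa [eA, eB] at this

lemma chain (hE : IsEquivEntailRel r) {x : G} (h0 : r {0} {x}) :
    ∀ (p : ℕ) (a : G), r {a} {a + p • x} := by
  have E := hE.toIsEntailRel
  intro p
  induction p with
  | zero => intro a; simpa [zero_nsmul] using E.refl a
  | succ p ih =>
    intro a
    have step : r {a + p • x} {a + (p + 1) • x} := by
      have heq := hE.equivariant (a + p • x) ⟨0, Finset.mem_singleton_self 0⟩
        ⟨x, Finset.mem_singleton_self x⟩ h0
      simp only [Finset.image_singleton, add_zero] at heq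
      have e2 : a + p • x + x = a + (p + 1) • x := by rw [succ_nsmul]; abel
      rwa [e2] at heq
    refine E.trans (c := a + p • x) ⟨a, Finset.mem_singleton_self a⟩
      ⟨_, Finset.mem_singleton_self _⟩ ?_ ?_
    · exact mono' E ⟨a, Finset.mem_singleton_self a⟩ ⟨_, Finset.mem_singleton_self _⟩ (ih a)
        (Finset.Subset.refl _) (Finset.singleton_subset_iff.mpr (Finset.mem_insert_self _ _))
    · exact mono' E ⟨_, Finset.mem_singleton_self _⟩ ⟨_, Finset.mem_singleton_self _⟩ step
        (Finset.singleton_subset_iff.mpr (Finset.mem_insert_self _ _)) (Finset.Subset.refl _)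

end ForcingAux2

open ForcingAux ForcingAux2

/-- Forcing positivity for a regular entailment relation: `⊢ₓ` is a regular entailment
relation, coarser than `⊢`, satisfying `{0} ⊢ₓ {x}`, and it is the finest equivariant
entailment relation with these properties. -/
theorem forcing_positivity_regular {G : Type*} [DecidableEq G] [AddCommGroup G] [PartialOrder G] [IsOrderedAddMonoid G]
    (r : Finset G → Finset G → Prop) (h : IsRegularEntailRel r) (x : G) :
    IsRegularEntailRel (forceEntail r x) ∧
    (∀ A B : Finset G, r A B → forceEntail r x A B) ∧
    forceEntail r x {0} {x} ∧
    (∀ r' : Finset G → Finset G → Prop, IsEquivEntailRel r' →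
      (∀ A B : Finset G, r A B → r' A B) → r' {0} {x} →
      ∀ A B : Finset G, A.Nonempty → B.Nonempty → forceEntail r x A B → r' A B) := by
  classical
  have E := h.toIsEquivEntailRel.toIsEntailRel
  have himg0 : ∀ A : Finset G, A.image (fun a => a + (0:ℕ) • x) = A := by
    intro A; simp [zero_nsmul]
  have coarser : ∀ A B : Finset G, r A B → forceEntail r x A B := by
    intro A B hAB
    exact ⟨0, by rw [himg0, Finset.union_self]; exact hAB⟩
  have hzero : forceEntail r x {0} {x} := by
    refine ⟨1, ?_⟩
    have himg : ({0} : Finset G).image (fun a => a + (1:ℕ) • x) = {x} := by simp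
    rw [himg]
    exact mono' E ⟨x, Finset.mem_singleton_self x⟩ ⟨x, Finset.mem_singleton_self x⟩
      (E.refl x) (by intro y hy; simp at hy; simp [hy]) (Finset.Subset.refl _)
  refine ⟨⟨⟨⟨?_, ?_, ?_⟩, ?_, ?_⟩, ?_⟩, coarser, hzero, ?_⟩
  · -- refl
    exact fun a => coarser {a} {a} (E.refl a)
  · -- mono
    rintro A B A' B' hA hB ⟨p, hp⟩
    refine ⟨p, mono' E (hA.mono Finset.subset_union_left) hB hp ?_ Finset.subset_union_left⟩
    intro y hy
    simp only [Finset.mem_union, Finset.mem_image] at hy ⊢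
    tauto
  · -- trans
    rintro A B c hA hB ⟨p, h1⟩ ⟨q, h2⟩
    refine ⟨p + q, ?_⟩
    set Aq := A.image (fun a => a + q • x) with hAqdef
    set As := A.image (fun a => a + (p + q) • x) with hAsdef
    set Z := A ∪ Aq ∪ As with hZdef
    have hAsubZ : A ⊆ Z := by
      intro y hy; exact Finset.mem_union_left _ (Finset.mem_union_left _ hy)
    have hZne : Z.Nonempty := hA.mono hAsubZ
    have hApne : (A ∪ A.image (fun a => a + p • x)).Nonempty := hA.mono Finset.subset_union_left
    have hcB : (insert c B).Nonempty := Finset.insert_nonempty _ _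
    have h1s : r (A ∪ As) (insert c B) := Mstep h x hA hcB p q h1
    have h1q : r (Aq ∪ As) (insert (c + q • x) (B.image (fun b => b + q • x))) := by
      have hs := shiftE h.toIsEquivEntailRel (q • x) hApne hcB h1
      have eL : (A ∪ A.image (fun a => a + p • x)).image (fun a => a + q • x) = Aq ∪ As := by
        rw [Finset.image_union, Finset.image_image, hAqdef, hAsdef]
        congr 1
        refine Finset.image_congr ?_
        intro a _
        show a + p • x + q • x = a + (p + q) • x
        rw [add_nsmul, ← add_assoc]
      have eR : (insert c B).image (fun b => b + q • x)
          = insert (c + q • x) (B.image (fun b => b + q • x)) := Finset.image_insert _ _ _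
      rwa [eL, eR] at hs
    have hZc : insert c Z = Z ∪ {c} := by ext y; simp <;> tauto
    have h3 : r (Z ∪ {c}) (insert (c + q • x) B) := by
      refine rightCut E (hZne.mono Finset.subset_union_left) (Finset.insert_nonempty _ _)
        (B.image (fun b => b + q • x)) ?_ ?_
      · intro d hd
        obtain ⟨b, hb, rfl⟩ := Finset.mem_image.mp hd
        have reg := h.regular b c (q • x) 0
        rw [add_comm (q • x) b, zero_add, zero_add, add_comm (q • x) c] at reg
        refine mono' E ⟨c, by simp⟩ ⟨b, by simp⟩ reg ?_ ?_
        · intro y hy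
          simp only [Finset.mem_insert, Finset.mem_singleton, Finset.mem_union] at hy ⊢
          tauto
        · intro y hy
          simp only [Finset.mem_insert, Finset.mem_singleton] at hy ⊢
          rcases hy with rfl | rfl
          · exact Or.inr hb
          · exact Or.inl rfl
      · refine mono' E ((hA.image _).mono Finset.subset_union_left)
          (Finset.insert_nonempty _ _) h1q ?_ ?_
        · intro y hy
          simp only [Finset.mem_union, hZdef] at hy ⊢
          tauto
        · intro y hy
          simp only [Finset.mem_insert, Finset.mem_union] at hy ⊢
          tauto
    have h4 : r (insert c Z) B := by
      refine E.trans (c := c + q • x) (Finset.insert_nonempty _ _) hB ?_ ?_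
      · rw [hZc]; exact h3
      · refine mono' E ((Finset.insert_nonempty c A).mono Finset.subset_union_left) hB h2 ?_
          (Finset.Subset.refl _)
        intro y hy
        simp only [Finset.mem_union, Finset.mem_insert, Finset.mem_image, hZdef, hAqdef] at hy ⊢
        rcases hy with (rfl | hy) | ⟨a, (rfl | ha), rfl⟩
        · tauto
        · tauto
        · tauto
        · exact Or.inr (Or.inr (Or.inl (Or.inr ⟨a, ha, rfl⟩)))
    have h5 : r Z B := by
      refine E.trans (c := c) hZne hB ?_ h4
      refine mono' E (hA.mono Finset.subset_union_left) hcB h1s ?_ (Finset.Subset.refl _)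
      intro y hy
      simp only [Finset.mem_union, hZdef] at hy ⊢
      tauto
    refine leftCut E (hA.mono Finset.subset_union_left) hB Aq ?_ ?_
    · intro d hd
      obtain ⟨a, ha, rfl⟩ := Finset.mem_image.mp hd
      have hk := Klem h x q (p + q) (by omega) a
      refine mono' E ⟨a, by simp⟩ ⟨_, Finset.mem_singleton_self _⟩ hk ?_
        (Finset.singleton_subset_iff.mpr (Finset.mem_insert_self _ _))
      intro y hy
      simp only [Finset.mem_insert, Finset.mem_singleton] at hy
      rcases hy with rfl | rfl
      · exact Finset.mem_union_left _ ha
      · exact Finset.mem_union_right _ (Finset.mem_image_of_mem _ ha)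
    · refine mono' E hZne hB h5 ?_ (Finset.Subset.refl _)
      intro y hy
      simp only [Finset.mem_union, hZdef] at hy ⊢
      tauto
  · -- le_entail
    exact fun a b hab => coarser _ _ (h.toIsEquivEntailRel.le_entail hab)
  · -- equivariant
    rintro A B t hA hB ⟨p, hp⟩
    refine ⟨p, ?_⟩
    have hs := h.toIsEquivEntailRel.equivariant t (hA.mono Finset.subset_union_left) hB hp
    have eL : (A ∪ A.image (fun a => a + p • x)).image (fun a => t + a)
        = A.image (fun a => t + a) ∪ (A.image (fun a => t + a)).image (fun a => a + p • x) := by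
      rw [Finset.image_union, Finset.image_image, Finset.image_image]
      congr 1
      refine Finset.image_congr ?_
      intro a _
      show t + (a + p • x) = (t + a) + p • x
      rw [add_assoc]
    rwa [eL] at hs
  · -- regular
    exact fun a b u v => coarser _ _ (h.regular a b u v)
  · -- universal property
    rintro r' hr' hcoarse h0x A B hA hB ⟨p, hp⟩
    have E' := hr'.toIsEntailRel
    refine leftCut E' hA hB (A.image (fun a => a + p • x)) ?_ (hcoarse _ _ hp)
    intro d hd
    obtain ⟨a, ha, rfl⟩ := Finset.mem_image.mp hd
    exact mono' E' ⟨a, Finset.mem_singleton_self a⟩ ⟨_, Finset.mem_singleton_self _⟩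
      (chain hr' h0x p a) (Finset.singleton_subset_iff.mpr ha)
      (Finset.singleton_subset_iff.mpr (Finset.mem_insert_self _ _))
end

section
/- Let G be a (partially) ordered abelian group, ⊢ a regular entailment relation for G, A and B nonempty finite subsets of G, and x ∈ G. If there exist natural numbers p and q such that A ∪ (A + p·x) ⊢ B and A ∪ (A − q·x) ⊢ B, then A ⊢ B. (One may compute with a regular entailment relation as if the elements of G were linearly ordered.) -/
section Helpers
variable {G : Type*} [DecidableEq G] [AddCommGroup G] [PartialOrder G] [IsOrderedAddMonoid G]
  {r : Finset G → Finset G → Prop}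

private lemma rmono' (h : IsRegularEntailRel r) {A B A' B' : Finset G} (hA : A.Nonempty)
    (hB : B.Nonempty) (hAB : r A B) (h1 : A ⊆ A') (h2 : B ⊆ B') : r A' B' := by
  have := h.toIsEquivEntailRel.toIsEntailRel.mono A' B' hA hB hAB
  rwa [Finset.union_eq_right.mpr h1, Finset.union_eq_right.mpr h2] at this

private lemma reg' (h : IsRegularEntailRel r) (u v d : G) : r {u, v} {u + d, v - d} := by
  have H := h.regular u (v - d) 0 d
  have e1 : (0:G) + u = u := zero_add u
  have e2 : d + (v - d) = v := by abel
  have e3 : d + u = u + d := add_comm d u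
  have e4 : (0:G) + (v - d) = v - d := zero_add _
  rw [e1, e2, e3, e4] at H
  exact H

private lemma KL (h : IsRegularEntailRel r) (x : G) :
    ∀ q p : ℕ, ∀ u : G, r {u} {u + p • x, u - q • x} := by
  have E := h.toIsEquivEntailRel.toIsEntailRel
  intro q
  induction q with
  | zero =>
    intro p u
    refine rmono' h (Finset.singleton_nonempty u) (Finset.singleton_nonempty u)
      (E.refl u) subset_rfl ?_
    intro y hy
    simp only [Finset.mem_singleton] at hy
    subst hy
    simp [zero_smul]
  | succ q ihq =>
    intro p
    induction p with
    | zero =>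
      intro u
      refine rmono' h (Finset.singleton_nonempty u) (Finset.singleton_nonempty u)
        (E.refl u) subset_rfl ?_
      intro y hy
      simp only [Finset.mem_singleton] at hy
      subst hy
      simp [zero_smul]
    | succ p ihp =>
      intro u
      refine E.trans (c := u + p • x) (Finset.singleton_nonempty u)
        (Finset.insert_nonempty _ _) ?_ ?_
      · -- r {u} (insert (u + p•x) {u+(p+1)•x, u-(q+1)•x})
        refine rmono' h (Finset.singleton_nonempty u) (Finset.insert_nonempty _ _)
          (ihp u) subset_rfl ?_
        intro y hy
        simp only [Finset.mem_insert, Finset.mem_singleton] at hy ⊢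
        tauto
      · -- r (insert (u+p•x) {u}) {u+(p+1)•x, u-(q+1)•x}
        refine E.trans (c := u - x) (Finset.insert_nonempty _ _)
          (Finset.insert_nonempty _ _) ?_ ?_
        · -- r {u+p•x, u} (insert (u-x) {u+(p+1)•x, u-(q+1)•x})
          have H := reg' h (u + p • x) u x
          have e : u + p • x + x = u + (p+1) • x := by
            rw [succ_nsmul]; abel
          rw [e] at H
          refine rmono' h (Finset.insert_nonempty _ _) (Finset.insert_nonempty _ _)
            H subset_rfl ?_
          intro y hy
          simp only [Finset.mem_insert, Finset.mem_singleton] at hy ⊢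
          tauto
        · -- r (insert (u-x) {u+p•x, u}) {u+(p+1)•x, u-(q+1)•x}
          have H := ihq (p+2) (u - x)
          have eA : (u - x) + (p+2) • x = u + (p+1) • x := by
            rw [show p+2 = (p+1)+1 from rfl, succ_nsmul, succ_nsmul]; abel
          have eB : (u - x) - q • x = u - (q+1) • x := by
            rw [succ_nsmul]; abel
          rw [eA, eB] at H
          refine rmono' h (Finset.singleton_nonempty _) (Finset.insert_nonempty _ _)
            H ?_ subset_rfl
          intro y hy
          simp only [Finset.mem_singleton] at hy
          simp [hy]

end Helpers

/-- One may compute with a regular entailment relation as if the elements of `G` were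
linearly ordered: if `A ∪ (A + p·x) ⊢ B` and `A ∪ (A − q·x) ⊢ B` for some natural
numbers `p`, `q`, then `A ⊢ B`. -/
theorem regular_entail_linear {G : Type*} [DecidableEq G] [AddCommGroup G] [PartialOrder G]
    [IsOrderedAddMonoid G]
    (r : Finset G → Finset G → Prop) (h : IsRegularEntailRel r)
    (A B : Finset G) (hA : A.Nonempty) (hB : B.Nonempty) (x : G)
    (hpos : ∃ p : ℕ, r (A ∪ A.image (fun a => a + p • x)) B)
    (hneg : ∃ q : ℕ, r (A ∪ A.image (fun a => a - q • x)) B) :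
    r A B := by
  have E := h.toIsEquivEntailRel.toIsEntailRel
  obtain ⟨p, hp⟩ := hpos
  obtain ⟨q, hq⟩ := hneg
  have hXne : ∀ S T : Finset G,
      (A ∪ S.image (fun a => a + p • x) ∪ T.image (fun a => a - q • x)).Nonempty := by
    intro S T
    obtain ⟨a, ha⟩ := hA
    exact ⟨a, by simp [Finset.mem_union, ha]⟩
  have hSfull : ∀ S T : Finset G, A ⊆ S →
      r (A ∪ S.image (fun a => a + p • x) ∪ T.image (fun a => a - q • x)) B := by
    intro S T hAS
    refine rmono' h ?_ hB hp ?_ subset_rfl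
    · obtain ⟨a, ha⟩ := hA; exact ⟨a, by simp [ha]⟩
    · intro y hy
      simp only [Finset.mem_union, Finset.mem_image] at hy ⊢
      rcases hy with hy | ⟨a, ha, rfl⟩
      · exact Or.inl (Or.inl hy)
      · exact Or.inl (Or.inr ⟨a, hAS ha, rfl⟩)
  have hTfull : ∀ S T : Finset G, A ⊆ T →
      r (A ∪ S.image (fun a => a + p • x) ∪ T.image (fun a => a - q • x)) B := by
    intro S T hAT
    refine rmono' h ?_ hB hq ?_ subset_rfl
    · obtain ⟨a, ha⟩ := hA; exact ⟨a, by simp [ha]⟩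
    · intro y hy
      simp only [Finset.mem_union, Finset.mem_image] at hy ⊢
      rcases hy with hy | ⟨a, ha, rfl⟩
      · exact Or.inl (Or.inl hy)
      · exact Or.inr ⟨a, hAT ha, rfl⟩
  have main : ∀ n : ℕ, ∀ S T : Finset G, S ⊆ A → T ⊆ A →
      (A \ S).card + (A \ T).card ≤ n →
      r (A ∪ S.image (fun a => a + p • x) ∪ T.image (fun a => a - q • x)) B := by
    intro n
    induction n with
    | zero =>
      intro S T hS hT hcard
      have : (A \ S).card = 0 := by omega
      have hAS : A ⊆ S := by
        intro a ha
        by_contra haS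
        have : a ∈ A \ S := Finset.mem_sdiff.mpr ⟨ha, haS⟩
        simp [Finset.card_eq_zero.mp ‹(A \ S).card = 0›] at this
      exact hSfull S T hAS
    | succ n ih =>
      intro S T hS hT hcard
      by_cases hAS : A ⊆ S
      · exact hSfull S T hAS
      by_cases hAT : A ⊆ T
      · exact hTfull S T hAT
      have measS : ∀ b : G, b ∈ A → b ∉ S → (A \ insert b S).card < (A \ S).card := by
        intro b hbA hbS
        apply Finset.card_lt_card
        rw [Finset.ssubset_iff_of_subset
          (Finset.sdiff_subset_sdiff subset_rfl (Finset.subset_insert b S))]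
        exact ⟨b, Finset.mem_sdiff.mpr ⟨hbA, hbS⟩, by simp⟩
      have measT : ∀ a : G, a ∈ A → a ∉ T → (A \ insert a T).card < (A \ T).card := by
        intro a haA haT
        apply Finset.card_lt_card
        rw [Finset.ssubset_iff_of_subset
          (Finset.sdiff_subset_sdiff subset_rfl (Finset.subset_insert a T))]
        exact ⟨a, Finset.mem_sdiff.mpr ⟨haA, haT⟩, by simp⟩
      by_cases hout : ∃ c ∈ A, c ∉ S ∧ c ∉ T
      · -- a fresh element c : use KL at c and cut twice
        obtain ⟨c, hcA, hcS, hcT⟩ := hout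
        have ih1 : r (A ∪ (insert c S).image (fun a => a + p • x) ∪
            T.image (fun a => a - q • x)) B := by
          refine ih (insert c S) T (Finset.insert_subset hcA hS) hT ?_
          have := measS c hcA hcS
          omega
        have ih2 : r (A ∪ S.image (fun a => a + p • x) ∪
            (insert c T).image (fun a => a - q • x)) B := by
          refine ih S (insert c T) hS (Finset.insert_subset hcA hT) ?_
          have := measT c hcA hcT
          omega
        refine E.trans (c := c + p • x) (hXne S T) hB ?_ ?_
        · -- r X (insert (c + p•x) B)
          refine E.trans (c := c - q • x) (hXne S T) (Finset.insert_nonempty _ _) ?_ ?_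
          · -- r X (insert (c-q•x) (insert (c+p•x) B)) from KL
            refine rmono' h (Finset.singleton_nonempty c) (Finset.insert_nonempty _ _)
              (KL h x q p c) ?_ ?_
            · intro y hy
              simp only [Finset.mem_singleton] at hy
              simp [hy, Finset.mem_union, hcA]
            · intro y hy
              simp only [Finset.mem_insert, Finset.mem_singleton] at hy ⊢
              tauto
          · -- r (insert (c-q•x) X) (insert (c+p•x) B) from ih2
            refine rmono' h (hXne S (insert c T)) hB ih2 ?_ ?_
            · intro y hy
              simp only [Finset.mem_union, Finset.mem_image, Finset.mem_insert] at hy ⊢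
              rcases hy with (hy | ⟨a, ha, rfl⟩) | ⟨a, (rfl | ha), rfl⟩
              · tauto
              · exact Or.inr (Or.inl (Or.inr ⟨a, ha, rfl⟩))
              · exact Or.inl rfl
              · exact Or.inr (Or.inr ⟨a, ha, rfl⟩)
            · exact Finset.subset_insert _ _
        · -- r (insert (c+p•x) X) B from ih1
          refine rmono' h (hXne (insert c S) T) hB ih1 ?_ subset_rfl
          intro y hy
          simp only [Finset.mem_union, Finset.mem_image, Finset.mem_insert] at hy ⊢
          rcases hy with (hy | ⟨a, (rfl | ha), rfl⟩) | ⟨a, ha, rfl⟩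
          · tauto
          · exact Or.inl rfl
          · exact Or.inr (Or.inl (Or.inr ⟨a, ha, rfl⟩))
          · exact Or.inr (Or.inr ⟨a, ha, rfl⟩)
      · -- every element of A is in S or T; pick a ∈ S \ T, b ∈ T \ S, use the swap
        push_neg at hout
        obtain ⟨a, haA, haT⟩ := Finset.not_subset.mp hAT
        obtain ⟨b, hbA, hbS⟩ := Finset.not_subset.mp hAS
        have haS : a ∈ S := by
          by_contra haS
          exact haT (hout a haA haS)
        have hbT : b ∈ T := hout b hbA hbS
        have ih1 : r (A ∪ (insert b S).image (fun a => a + p • x) ∪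
            T.image (fun a => a - q • x)) B := by
          refine ih (insert b S) T (Finset.insert_subset hbA hS) hT ?_
          have := measS b hbA hbS
          omega
        have ih2 : r (A ∪ S.image (fun a => a + p • x) ∪
            (insert a T).image (fun a => a - q • x)) B := by
          refine ih S (insert a T) hS (Finset.insert_subset haA hT) ?_
          have := measT a haA haT
          omega
        have swap : r {a + p • x, b - q • x} {b + p • x, a - q • x} := by
          have H := reg' h (a + p • x) (b - q • x) (b - a)
          have e1 : a + p • x + (b - a) = b + p • x := by abel
          have e2 : b - q • x - (b - a) = a - q • x := by abel
          rw [e1, e2] at H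
          exact H
        refine E.trans (c := a - q • x) (hXne S T) hB ?_ ?_
        · -- r X (insert (a - q•x) B)
          refine E.trans (c := b + p • x) (hXne S T) (Finset.insert_nonempty _ _) ?_ ?_
          · -- r X (insert (b+p•x) (insert (a-q•x) B)) from swap
            refine rmono' h (Finset.insert_nonempty _ _) (Finset.insert_nonempty _ _)
              swap ?_ ?_
            · intro y hy
              simp only [Finset.mem_insert, Finset.mem_singleton] at hy
              rcases hy with rfl | rfl
              · exact Finset.mem_union_left _ (Finset.mem_union_right _
                  (Finset.mem_image.mpr ⟨a, haS, rfl⟩))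
              · exact Finset.mem_union_right _ (Finset.mem_image.mpr ⟨b, hbT, rfl⟩)
            · intro y hy
              simp only [Finset.mem_insert, Finset.mem_singleton] at hy ⊢
              tauto
          · -- r (insert (b+p•x) X) (insert (a-q•x) B) from ih1
            refine rmono' h (hXne (insert b S) T) hB ih1 ?_ (Finset.subset_insert _ _)
            intro y hy
            simp only [Finset.mem_union, Finset.mem_image, Finset.mem_insert] at hy ⊢
            rcases hy with (hy | ⟨a', (rfl | ha'), rfl⟩) | ⟨a', ha', rfl⟩
            · tauto
            · exact Or.inl rfl
            · exact Or.inr (Or.inl (Or.inr ⟨a', ha', rfl⟩))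
            · exact Or.inr (Or.inr ⟨a', ha', rfl⟩)
        · -- r (insert (a-q•x) X) B from ih2
          refine rmono' h (hXne S (insert a T)) hB ih2 ?_ subset_rfl
          intro y hy
          simp only [Finset.mem_union, Finset.mem_image, Finset.mem_insert] at hy ⊢
          rcases hy with (hy | ⟨a', ha', rfl⟩) | ⟨a', (rfl | ha'), rfl⟩
          · tauto
          · exact Or.inr (Or.inl (Or.inr ⟨a', ha', rfl⟩))
          · exact Or.inl rfl
          · exact Or.inr (Or.inr ⟨a', ha', rfl⟩)
  have := main ((A \ ∅).card + (A \ ∅).card) ∅ ∅ (Finset.empty_subset A)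
    (Finset.empty_subset A) le_rfl
  simpa using this
end

section
/- Let G be a (partially) ordered abelian group, ⊢ a regular entailment relation for G, and A, B nonempty finite subsets of G. Then: (1) if A + B ⊢ {b} holds for every b ∈ B, then A ⊢ {0}; (2) A ⊢ B holds if and only if A − B ⊢ {0}, if and only if {0} ⊢ B − A. -/
open Pointwise

namespace RegAux
variable {G : Type*} [DecidableEq G] [AddCommGroup G] [PartialOrder G] [IsOrderedAddMonoid G] {r : Finset G → Finset G → Prop}

set_option linter.unusedSectionVars false

lemma mono' (h : IsEntailRel r) {A B A' B' : Finset G} (hA : A.Nonempty) (hB : B.Nonempty)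
    (hsA : A ⊆ A') (hsB : B ⊆ B') (hr : r A B) : r A' B' := by
  have := h.mono A' B' hA hB hr
  rwa [Finset.union_eq_right.mpr hsA, Finset.union_eq_right.mpr hsB] at this

lemma of_mem (h : IsEntailRel r) {A B : Finset G} {a : G} (ha : a ∈ A) (hb : a ∈ B) : r A B :=
  mono' h (Finset.singleton_nonempty a) (Finset.singleton_nonempty a)
    (Finset.singleton_subset_iff.mpr ha) (Finset.singleton_subset_iff.mpr hb) (h.refl a)

lemma game (h : IsEntailRel r) {X Y : Finset G} (F : Finset G) (hX : X.Nonempty)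
    (hY : Y.Nonempty) (H : ∀ S T : Finset G, S ∪ T = F → r (X ∪ S) (Y ∪ T)) : r X Y := by
  have claim : ∀ R S T : Finset G, S ∪ T ∪ R = F → r (X ∪ S) (Y ∪ T) := by
    intro R
    induction R using Finset.induction_on with
    | empty => intro S T hst; exact H S T (by simpa using hst)
    | insert x R hx ih =>
      intro S T hst
      have h1 : (S ∪ {x}) ∪ T ∪ R = F := by rw [← hst]; ext z; simp
      have h2 : S ∪ (T ∪ {x}) ∪ R = F := by rw [← hst]; ext z; simp
      have r1 := ih _ _ h1
      have r2 := ih _ _ h2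
      have e1 : X ∪ (S ∪ {x}) = insert x (X ∪ S) := by ext z; simp
      have e2 : Y ∪ (T ∪ {x}) = insert x (Y ∪ T) := by ext z; simp
      rw [e1] at r1; rw [e2] at r2
      exact h.trans (hX.mono Finset.subset_union_left) (hY.mono Finset.subset_union_left) r2 r1
  have := claim F ∅ ∅ (by simp)
  simpa using this

lemma cycle_or_source (V : Finset G) (hV : V.Nonempty) (P : G → G → Prop) :
    (∃ v ∈ V, ∀ v' ∈ V, ¬ P v' v) ∨
    (∃ (k : ℕ) (u : ℕ → G), 0 < k ∧ (∀ n, u n ∈ V) ∧ u k = u 0 ∧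
      ∀ n, P (u (n+1)) (u n)) := by
  by_cases hs : ∃ v ∈ V, ∀ v' ∈ V, ¬ P v' v
  · exact Or.inl hs
  push_neg at hs
  right
  obtain ⟨v₀, hv₀⟩ := hV
  choose! g hg1 hg2 using hs
  set u : ℕ → G := fun n => g^[n] v₀ with hu
  have humem : ∀ n, u n ∈ V := by
    intro n; induction n with
    | zero => simpa [hu]
    | succ n ih =>
      have : u (n+1) = g (u n) := by rw [hu]; simp [Function.iterate_succ_apply']
      rw [this]; exact hg1 _ ih
  have hedge : ∀ n, P (u (n+1)) (u n) := by
    intro n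
    have : u (n+1) = g (u n) := by rw [hu]; simp [Function.iterate_succ_apply']
    rw [this]; exact hg2 _ (humem n)
  obtain ⟨i, hi, j, hj, hne, heq⟩ :=
    Finset.exists_ne_map_eq_of_card_lt_of_maps_to (s := Finset.range (V.card + 1)) (t := V)
      (by simp) (fun n _ => humem n)
  rcases Nat.lt_or_ge i j with hlt | hge
  · refine ⟨j - i, fun n => u (i + n), by omega, fun n => humem _, ?_, fun n => ?_⟩
    · show u (i + (j - i)) = u (i + 0)
      have e : i + (j - i) = j := by omega
      rw [e]; simpa using heq.symm
    · show P (u (i + (n+1))) (u (i + n))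
      have e : i + (n+1) = (i + n) + 1 := by omega
      rw [e]; exact hedge (i + n)
  · have hlt : j < i := by omega
    refine ⟨i - j, fun n => u (j + n), by omega, fun n => humem _, ?_, fun n => ?_⟩
    · show u (j + (i - j)) = u (j + 0)
      have e : j + (i - j) = i := by omega
      rw [e]; simpa using heq
    · show P (u (j + (n+1))) (u (j + n))
      have e : j + (n+1) = (j + n) + 1 := by omega
      rw [e]; exact hedge (j + n)

lemma exch (h : IsRegularEntailRel r) {p q u v : G} (hpq : p + q = u + v) :
    r {p, q} {u, v} := by
  have h2 := h.regular 0 (q - u) p u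
  have e1 : p + 0 = p := add_zero p
  have e2 : u + (q - u) = q := by abel
  have e3 : u + 0 = u := add_zero u
  have e4 : p + (q - u) = v := by rw [add_sub, hpq]; abel
  rw [e1, e2, e3, e4] at h2
  exact h2

lemma gm3 (h : IsRegularEntailRel r) :
    ∀ (n : ℕ) (xs ys : List G), xs.length = n → ys.length = n → 0 < n →
      xs.sum = ys.sum → r xs.toFinset ys.toFinset := by
  have hEnt := h.toIsEquivEntailRel.toIsEntailRel
  intro n
  induction n with
  | zero => intro xs ys _ _ hpos _; omega
  | succ n ih =>
    intro xs ys hx hy _ hsum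
    rcases xs with _ | ⟨x₁, xs'⟩
    · simp at hx
    rcases ys with _ | ⟨y₁, ys'⟩
    · simp at hy
    rcases xs' with _ | ⟨x₂, xs''⟩
    · have hn : n = 0 := by simpa using hx
      have hys' : ys' = [] := by
        have : ys'.length = 0 := by simp at hy; omega
        exact List.length_eq_zero_iff.mp this
      subst hys'
      have hxy : x₁ = y₁ := by simpa using hsum
      subst hxy
      simpa using hEnt.refl x₁
    · have hn : n = xs''.length + 1 := by simp at hx; omega
      rcases ys' with _ | ⟨y₂, ys''⟩
      · simp at hy; omega
      set c := x₁ + x₂ - y₁ with hc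
      have h0 : x₁ + (x₂ + xs''.sum) = y₁ + (y₂ + ys''.sum) := by simpa using hsum
      have hsum' : (c :: xs'').sum = (y₂ :: ys'').sum := by
        simp only [List.sum_cons, hc]
        calc x₁ + x₂ - y₁ + xs''.sum = (x₁ + (x₂ + xs''.sum)) - y₁ := by abel
        _ = (y₁ + (y₂ + ys''.sum)) - y₁ := by rw [h0]
        _ = y₂ + ys''.sum := by abel
      have hih := ih (c :: xs'') (y₂ :: ys'') (by simp [hn]) (by simp at hy ⊢; omega)
        (by omega) hsum'
      have hx2 : r {x₁, x₂} ({y₁, c} : Finset G) := exch h (by rw [hc]; abel)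
      refine hEnt.trans (c := c) ⟨x₁, by simp⟩ ⟨y₁, by simp⟩ ?_ ?_
      · refine mono' hEnt ⟨x₁, by simp⟩ ⟨y₁, by simp⟩ ?_ ?_ hx2
        · intro z hz; simp at hz ⊢; tauto
        · intro z hz; simp at hz ⊢; tauto
      · refine mono' hEnt ⟨c, by simp⟩ ⟨y₂, by simp⟩ ?_ ?_ hih
        · intro z hz; simp at hz ⊢; tauto
        · intro z hz; simp at hz ⊢; tauto

lemma htel {k : ℕ} (u : ℕ → G) (hcyc : u k = u 0) :
    ∑ i : Fin k, (u (i.1 + 1) - u i.1) = 0 := by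
  rw [Fin.sum_univ_eq_sum_range (fun n => u (n+1) - u n) k, Finset.sum_range_sub u, hcyc,
    sub_self]

/-- Forward direction: `A ⊢ B → {0} ⊢ B - A`. -/
lemma fwd1 (h : IsRegularEntailRel r) {A B : Finset G} (hA : A.Nonempty) (hB : B.Nonempty)
    (hAB : r A B) : r {0} (B - A) := by
  have hEnt := h.toIsEquivEntailRel.toIsEntailRel
  refine game hEnt (A - A) (Finset.singleton_nonempty 0) (hB.sub hA) ?_
  intro S T hST
  rcases cycle_or_source A hA (fun a' a => a' - a ∈ T) with
    ⟨a, haA, hsrc⟩ | ⟨k, u, hk, humem, hcyc, hedge⟩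
  · have ht := h.toIsEquivEntailRel.equivariant (-a) hA hB hAB
    refine mono' hEnt (hA.image _) (hB.image _) ?_ ?_ ht
    · rw [Finset.image_subset_iff]
      intro a' ha'
      have hmem : a' - a ∈ S ∪ T := by rw [hST]; exact Finset.sub_mem_sub ha' haA
      have hS : a' - a ∈ S := by
        rcases Finset.mem_union.1 hmem with h' | h'
        · exact h'
        · exact absurd h' (hsrc a' ha')
      have e : -a + a' = a' - a := by abel
      rw [e]
      exact Finset.mem_union_right _ hS
    · rw [Finset.image_subset_iff]
      intro b hb
      have e : -a + b = b - a := by abel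
      rw [e]
      exact Finset.mem_union_left _ (Finset.sub_mem_sub hb haA)
  · set xs : List G := List.ofFn (fun _ : Fin k => (0:G)) with hxs
    set ys : List G := List.ofFn (fun i : Fin k => u (i.1+1) - u i.1) with hys
    have hsum : xs.sum = ys.sum := by
      have h1 : xs.sum = 0 := by
        rw [hxs, List.sum_ofFn]; simp
      have h2 : ys.sum = 0 := by
        rw [hys, List.sum_ofFn]; exact htel u hcyc
      rw [h1, h2]
    have hgm := gm3 h k xs ys (by simp [hxs]) (by simp [hys]) hk hsum
    refine mono' hEnt ?_ ?_ ?_ ?_ hgm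
    · exact ⟨0, by rw [hxs]; simp only [List.mem_toFinset, List.mem_ofFn]; exact ⟨⟨0, hk⟩, trivial⟩⟩
    · exact ⟨u (0+1) - u 0, by
        rw [hys]; simp only [List.mem_toFinset, List.mem_ofFn]; exact ⟨⟨0, hk⟩, rfl⟩⟩
    · intro z hz
      rw [hxs] at hz; simp only [List.mem_toFinset, List.mem_ofFn] at hz
      obtain ⟨i, hi⟩ := hz
      rw [← hi]
      exact Finset.mem_union_left _ (Finset.mem_singleton_self 0)
    · intro z hz
      rw [hys] at hz; simp only [List.mem_toFinset, List.mem_ofFn] at hz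
      obtain ⟨i, hi⟩ := hz
      rw [← hi]
      exact Finset.mem_union_right _ (hedge i.1)

/-- Forward direction: `A ⊢ B → A - B ⊢ {0}`. -/
lemma fwd2 (h : IsRegularEntailRel r) {A B : Finset G} (hA : A.Nonempty) (hB : B.Nonempty)
    (hAB : r A B) : r (A - B) {0} := by
  have hEnt := h.toIsEquivEntailRel.toIsEntailRel
  refine game hEnt (B - B) (hA.sub hB) (Finset.singleton_nonempty 0) ?_
  intro S T hST
  rcases cycle_or_source B hB (fun b' b => b' - b ∈ S) with
    ⟨b, hbB, hsrc⟩ | ⟨k, u, hk, humem, hcyc, hedge⟩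
  · have ht := h.toIsEquivEntailRel.equivariant (-b) hA hB hAB
    refine mono' hEnt (hA.image _) (hB.image _) ?_ ?_ ht
    · rw [Finset.image_subset_iff]
      intro a ha
      have e : -b + a = a - b := by abel
      rw [e]
      exact Finset.mem_union_left _ (Finset.sub_mem_sub ha hbB)
    · rw [Finset.image_subset_iff]
      intro b' hb'
      have hmem : b' - b ∈ S ∪ T := by rw [hST]; exact Finset.sub_mem_sub hb' hbB
      have hT : b' - b ∈ T := by
        rcases Finset.mem_union.1 hmem with h' | h'
        · exact absurd h' (hsrc b' hb')
        · exact h'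
      have e : -b + b' = b' - b := by abel
      rw [e]
      exact Finset.mem_union_right _ hT
  · set xs : List G := List.ofFn (fun i : Fin k => u (i.1+1) - u i.1) with hxs
    set ys : List G := List.ofFn (fun _ : Fin k => (0:G)) with hys
    have hsum : xs.sum = ys.sum := by
      have h1 : ys.sum = 0 := by rw [hys, List.sum_ofFn]; simp
      have h2 : xs.sum = 0 := by rw [hxs, List.sum_ofFn]; exact htel u hcyc
      rw [h1, h2]
    have hgm := gm3 h k xs ys (by simp [hxs]) (by simp [hys]) hk hsum
    refine mono' hEnt ?_ ?_ ?_ ?_ hgm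
    · exact ⟨u (0+1) - u 0, by
        rw [hxs]; simp only [List.mem_toFinset, List.mem_ofFn]; exact ⟨⟨0, hk⟩, rfl⟩⟩
    · exact ⟨0, by rw [hys]; simp only [List.mem_toFinset, List.mem_ofFn]; exact ⟨⟨0, hk⟩, trivial⟩⟩
    · intro z hz
      rw [hxs] at hz; simp only [List.mem_toFinset, List.mem_ofFn] at hz
      obtain ⟨i, hi⟩ := hz
      rw [← hi]
      exact Finset.mem_union_right _ (hedge i.1)
    · intro z hz
      rw [hys] at hz; simp only [List.mem_toFinset, List.mem_ofFn] at hz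
      obtain ⟨i, hi⟩ := hz
      rw [← hi]
      exact Finset.mem_union_left _ (Finset.mem_singleton_self 0)

/-- Converse: `{0} ⊢ B - A → A ⊢ B`. -/
lemma bwd1 (h : IsRegularEntailRel r) {A B : Finset G} (hA : A.Nonempty) (hB : B.Nonempty)
    (hyp : r {0} (B - A)) : r A B := by
  have hEnt := h.toIsEquivEntailRel.toIsEntailRel
  refine game hEnt (B - A + A) hA hB ?_
  intro S T hST
  rcases cycle_or_source A hA (fun a' a => ∃ b ∈ B, b - a' + a ∉ B ∪ T) with
    ⟨a, haA, hsrc⟩ | ⟨k, u, hk, humem, hcyc, hedge⟩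
  · have ht := h.toIsEquivEntailRel.equivariant a (Finset.singleton_nonempty 0) (hB.sub hA) hyp
    refine mono' hEnt ((Finset.singleton_nonempty 0).image _) ((hB.sub hA).image _) ?_ ?_ ht
    · rw [Finset.image_subset_iff]
      intro z hz
      rw [Finset.mem_singleton] at hz
      subst hz
      rw [add_zero]
      exact Finset.mem_union_left _ haA
    · rw [Finset.image_subset_iff]
      intro w hw
      rw [Finset.mem_sub] at hw
      obtain ⟨b, hb, a', ha', rfl⟩ := hw
      have hnP := hsrc a' ha'
      push_neg at hnP
      have e : a + (b - a') = b - a' + a := by abel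
      rw [e]
      exact hnP b hb
  · set W : Fin k → G := fun i => (hedge i.1).choose with hW
    have hWB : ∀ i : Fin k, W i ∈ B := fun i => (hedge i.1).choose_spec.1
    have hWnot : ∀ i : Fin k, W i - u (i.1+1) + u i.1 ∉ B ∪ T :=
      fun i => (hedge i.1).choose_spec.2
    have hWS : ∀ i : Fin k, W i - u (i.1+1) + u i.1 ∈ S := by
      intro i
      have hmem : W i - u (i.1+1) + u i.1 ∈ S ∪ T := by
        rw [hST]
        exact Finset.add_mem_add (Finset.sub_mem_sub (hWB i) (humem (i.1+1))) (humem i.1)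
      rcases Finset.mem_union.1 hmem with h' | h'
      · exact h'
      · exact absurd (Finset.mem_union_right B h') (hWnot i)
    set xs : List G := List.ofFn (fun i : Fin k => W i - u (i.1+1) + u i.1) with hxs
    set ys : List G := List.ofFn W with hys
    have hsum : xs.sum = ys.sum := by
      rw [hxs, hys, List.sum_ofFn, List.sum_ofFn]
      have e : ∀ i : Fin k, W i - u (i.1+1) + u i.1 = W i - (u (i.1+1) - u i.1) := by
        intro i; abel
      rw [Finset.sum_congr rfl (fun i _ => e i), Finset.sum_sub_distrib, htel u hcyc, sub_zero]
    have hgm := gm3 h k xs ys (by simp [hxs]) (by simp [hys]) hk hsum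
    refine mono' hEnt ?_ ?_ ?_ ?_ hgm
    · exact ⟨W ⟨0, hk⟩ - u (0+1) + u 0, by
        rw [hxs]; simp only [List.mem_toFinset, List.mem_ofFn]; exact ⟨⟨0, hk⟩, rfl⟩⟩
    · exact ⟨W ⟨0, hk⟩, by
        rw [hys]; simp only [List.mem_toFinset, List.mem_ofFn]; exact ⟨⟨0, hk⟩, rfl⟩⟩
    · intro z hz
      rw [hxs] at hz; simp only [List.mem_toFinset, List.mem_ofFn] at hz
      obtain ⟨i, hi⟩ := hz
      rw [← hi]
      exact Finset.mem_union_right _ (hWS i)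
    · intro z hz
      rw [hys] at hz; simp only [List.mem_toFinset, List.mem_ofFn] at hz
      obtain ⟨i, hi⟩ := hz
      rw [← hi]
      exact Finset.mem_union_left _ (hWB i)

/-- Converse: `A - B ⊢ {0} → A ⊢ B`. -/
lemma bwd2 (h : IsRegularEntailRel r) {A B : Finset G} (hA : A.Nonempty) (hB : B.Nonempty)
    (hyp : r (A - B) {0}) : r A B := by
  have hEnt := h.toIsEquivEntailRel.toIsEntailRel
  refine game hEnt (A - B + B) hA hB ?_
  intro S T hST
  rcases cycle_or_source B hB (fun b' b => ∃ a ∈ A, a - b' + b ∉ A ∪ S) with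
    ⟨b, hbB, hsrc⟩ | ⟨k, u, hk, humem, hcyc, hedge⟩
  · have ht := h.toIsEquivEntailRel.equivariant b (hA.sub hB) (Finset.singleton_nonempty 0) hyp
    refine mono' hEnt ((hA.sub hB).image _) ((Finset.singleton_nonempty 0).image _) ?_ ?_ ht
    · rw [Finset.image_subset_iff]
      intro w hw
      rw [Finset.mem_sub] at hw
      obtain ⟨a, ha, b', hb', rfl⟩ := hw
      have hnP := hsrc b' hb'
      push_neg at hnP
      have e : b + (a - b') = a - b' + b := by abel
      rw [e]
      exact hnP a ha
    · rw [Finset.image_subset_iff]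
      intro z hz
      rw [Finset.mem_singleton] at hz
      subst hz
      rw [add_zero]
      exact Finset.mem_union_left _ hbB
  · set W : Fin k → G := fun i => (hedge i.1).choose with hW
    have hWA : ∀ i : Fin k, W i ∈ A := fun i => (hedge i.1).choose_spec.1
    have hWnot : ∀ i : Fin k, W i - u (i.1+1) + u i.1 ∉ A ∪ S :=
      fun i => (hedge i.1).choose_spec.2
    have hWT : ∀ i : Fin k, W i - u (i.1+1) + u i.1 ∈ T := by
      intro i
      have hmem : W i - u (i.1+1) + u i.1 ∈ S ∪ T := by
        rw [hST]
        exact Finset.add_mem_add (Finset.sub_mem_sub (hWA i) (humem (i.1+1))) (humem i.1)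
      rcases Finset.mem_union.1 hmem with h' | h'
      · exact absurd (Finset.mem_union_right A h') (hWnot i)
      · exact h'
    set xs : List G := List.ofFn W with hxs
    set ys : List G := List.ofFn (fun i : Fin k => W i - u (i.1+1) + u i.1) with hys
    have hsum : xs.sum = ys.sum := by
      rw [hxs, hys, List.sum_ofFn, List.sum_ofFn]
      have e : ∀ i : Fin k, W i - u (i.1+1) + u i.1 = W i - (u (i.1+1) - u i.1) := by
        intro i; abel
      rw [Finset.sum_congr rfl (fun i _ => e i), Finset.sum_sub_distrib, htel u hcyc, sub_zero]
    have hgm := gm3 h k xs ys (by simp [hxs]) (by simp [hys]) hk hsum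
    refine mono' hEnt ?_ ?_ ?_ ?_ hgm
    · exact ⟨W ⟨0, hk⟩, by
        rw [hxs]; simp only [List.mem_toFinset, List.mem_ofFn]; exact ⟨⟨0, hk⟩, rfl⟩⟩
    · exact ⟨W ⟨0, hk⟩ - u (0+1) + u 0, by
        rw [hys]; simp only [List.mem_toFinset, List.mem_ofFn]; exact ⟨⟨0, hk⟩, rfl⟩⟩
    · intro z hz
      rw [hxs] at hz; simp only [List.mem_toFinset, List.mem_ofFn] at hz
      obtain ⟨i, hi⟩ := hz
      rw [← hi]
      exact Finset.mem_union_left _ (hWA i)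
    · intro z hz
      rw [hys] at hz; simp only [List.mem_toFinset, List.mem_ofFn] at hz
      obtain ⟨i, hi⟩ := hz
      rw [← hi]
      exact Finset.mem_union_right _ (hWT i)

/-- Statement (1): if `A + B ⊢ {b}` for all `b ∈ B` then `A ⊢ {0}`. -/
lemma stmt1 (h : IsRegularEntailRel r) {A B : Finset G} (hA : A.Nonempty) (hB : B.Nonempty)
    (hyp : ∀ b ∈ B, r (A + B) {b}) : r A {0} := by
  have hEnt := h.toIsEquivEntailRel.toIsEntailRel
  refine game hEnt (A + B - B) hA (Finset.singleton_nonempty 0) ?_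
  intro S T hST
  rcases cycle_or_source B hB (fun b' b => ∃ a ∈ A, a + b' - b ∉ A ∪ S) with
    ⟨b, hbB, hsrc⟩ | ⟨k, u, hk, humem, hcyc, hedge⟩
  · have ht := h.toIsEquivEntailRel.equivariant (-b) (hA.add hB) (Finset.singleton_nonempty b)
      (hyp b hbB)
    refine mono' hEnt ((hA.add hB).image _) ((Finset.singleton_nonempty b).image _) ?_ ?_ ht
    · rw [Finset.image_subset_iff]
      intro w hw
      rw [Finset.mem_add] at hw
      obtain ⟨a, ha, b', hb', rfl⟩ := hw
      have hnP := hsrc b' hb'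
      push_neg at hnP
      have e : -b + (a + b') = a + b' - b := by abel
      rw [e]
      exact hnP a ha
    · rw [Finset.image_subset_iff]
      intro z hz
      rw [Finset.mem_singleton] at hz
      subst hz
      rw [neg_add_cancel]
      exact Finset.mem_union_left _ (Finset.mem_singleton_self 0)
  · set W : Fin k → G := fun i => (hedge i.1).choose with hW
    have hWA : ∀ i : Fin k, W i ∈ A := fun i => (hedge i.1).choose_spec.1
    have hWnot : ∀ i : Fin k, W i + u (i.1+1) - u i.1 ∉ A ∪ S :=
      fun i => (hedge i.1).choose_spec.2
    have hWT : ∀ i : Fin k, W i + u (i.1+1) - u i.1 ∈ T := by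
      intro i
      have hmem : W i + u (i.1+1) - u i.1 ∈ S ∪ T := by
        rw [hST]
        exact Finset.sub_mem_sub (Finset.add_mem_add (hWA i) (humem (i.1+1))) (humem i.1)
      rcases Finset.mem_union.1 hmem with h' | h'
      · exact absurd (Finset.mem_union_right A h') (hWnot i)
      · exact h'
    set xs : List G := List.ofFn W with hxs
    set ys : List G := List.ofFn (fun i : Fin k => W i + u (i.1+1) - u i.1) with hys
    have hsum : xs.sum = ys.sum := by
      rw [hxs, hys, List.sum_ofFn, List.sum_ofFn]
      have e : ∀ i : Fin k, W i + u (i.1+1) - u i.1 = W i + (u (i.1+1) - u i.1) := by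
        intro i; abel
      rw [Finset.sum_congr rfl (fun i _ => e i), Finset.sum_add_distrib, htel u hcyc, add_zero]
    have hgm := gm3 h k xs ys (by simp [hxs]) (by simp [hys]) hk hsum
    refine mono' hEnt ?_ ?_ ?_ ?_ hgm
    · exact ⟨W ⟨0, hk⟩, by
        rw [hxs]; simp only [List.mem_toFinset, List.mem_ofFn]; exact ⟨⟨0, hk⟩, rfl⟩⟩
    · exact ⟨W ⟨0, hk⟩ + u (0+1) - u 0, by
        rw [hys]; simp only [List.mem_toFinset, List.mem_ofFn]; exact ⟨⟨0, hk⟩, rfl⟩⟩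
    · intro z hz
      rw [hxs] at hz; simp only [List.mem_toFinset, List.mem_ofFn] at hz
      obtain ⟨i, hi⟩ := hz
      rw [← hi]
      exact Finset.mem_union_left _ (hWA i)
    · intro z hz
      rw [hys] at hz; simp only [List.mem_toFinset, List.mem_ofFn] at hz
      obtain ⟨i, hi⟩ := hz
      rw [← hi]
      exact Finset.mem_union_right _ (hWT i)

end RegAux

/-- Cancellativity consequences of regularity: (1) if `A + B ⊢ {b}` for every `b ∈ B`,
then `A ⊢ {0}`; (2) `A ⊢ B` iff `A − B ⊢ {0}` iff `{0} ⊢ B − A`. -/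
theorem regular_entail_cancel {G : Type*} [DecidableEq G] [AddCommGroup G] [PartialOrder G] [IsOrderedAddMonoid G]
    (r : Finset G → Finset G → Prop) (h : IsRegularEntailRel r)
    (A B : Finset G) (hA : A.Nonempty) (hB : B.Nonempty) :
    ((∀ b ∈ B, r (A + B) {b}) → r A {0}) ∧
    (r A B ↔ r (A - B) {0}) ∧
    (r A B ↔ r {0} (B - A)) := by
  constructor
  · intro hyp
    exact RegAux.stmt1 h hA hB hyp
  constructor
  · exact ⟨fun hAB => RegAux.fwd2 h hA hB hAB, fun h2 => RegAux.bwd2 h hA hB h2⟩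
  · exact ⟨fun hAB => RegAux.fwd1 h hA hB hAB, fun h2 => RegAux.bwd1 h hA hB h2⟩
end

section
/- Let M be a cancellative commutative monoid equipped with a meet-semilattice order whose meet ⊓ is compatible with addition (x + (y ⊓ z) = (x + y) ⊓ (x + z) for all x, y, z ∈ M). Then there exists a lattice-ordered abelian group H and an injective monoid homomorphism φ : M → H that preserves the meet (φ(x ⊓ y) = φ(x) ⊓ φ(y)) and reflects the order (φ(x) ≤ φ(y) if and only if x ≤ y). -/
namespace GrothLGroupAux

universe u

class InfMonoid (α : Type u) extends AddCancelCommMonoid α, SemilatticeInf α where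
  add_inf : ∀ x y z : α, x + (y ⊓ z) = (x + y) ⊓ (x + z)

variable {α : Type u} [InfMonoid α]

instance (priority := low) : IsOrderedCancelAddMonoid α :=
  { add_le_add_left := fun a b h c => by
      have : c + a ⊓ b = c + a := by rw [inf_eq_left.2 h]
      rw [add_comm a c, add_comm b c]
      exact inf_eq_left.1 (by rw [← InfMonoid.add_inf, this])
    le_of_add_le_add_left := fun a b c h => by
      have : a + (b ⊓ c) = a + b := by rw [InfMonoid.add_inf]; exact inf_eq_left.2 h
      exact inf_eq_left.1 (add_left_cancel this) }

abbrev H (α : Type u) [InfMonoid α] : Type u := AddLocalization (⊤ : AddSubmonoid α)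

open AddLocalization

lemma mk_eq_mk'' {a c : α} {b d : (⊤ : AddSubmonoid α)} :
    (mk a b : H α) = mk c d ↔ ↑d + a = ↑b + c := mk_eq_mk_iff'

lemma mk_le_mk'' {a c : α} {b d : (⊤ : AddSubmonoid α)} :
    (mk a b : H α) ≤ mk c d ↔ ↑d + a ≤ ↑b + c := mk_le_mk

def neg' (x : H α) : H α :=
  AddLocalization.liftOn x (fun a b => mk (b : α) ⟨a, AddSubmonoid.mem_top a⟩) <| by
    intro a c b d h
    replace h := mk_eq_mk''.mp (mk_eq_mk_iff.mpr h)
    rw [mk_eq_mk'']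
    simpa [add_comm] using h.symm

@[simp] lemma neg'_mk (a : α) (b : (⊤ : AddSubmonoid α)) :
    neg' (mk a b : H α) = mk (b : α) ⟨a, AddSubmonoid.mem_top a⟩ := rfl

instance : Neg (H α) := ⟨neg'⟩

instance : AddCommGroup (H α) :=
  { (inferInstance : AddCommMonoid (H α)) with
    neg := neg'
    zsmul := zsmulRec
    neg_add_cancel := fun x => AddLocalization.induction_on x <| by
      rintro ⟨a, b⟩
      show neg' (mk a b) + mk a b = 0
      rw [neg'_mk, mk_add, ← mk_zero, mk_eq_mk'']
      push_cast
      abel }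

instance : IsOrderedAddMonoid (H α) := inferInstance

def inf' (x y : H α) : H α :=
  AddLocalization.liftOn₂ x y
    (fun a b c d => mk ((a + d) ⊓ (c + b)) (b + d)) <| by
    intro a a' b b' c c' d d' h1 h2
    replace h1 := mk_eq_mk''.mp (mk_eq_mk_iff.mpr h1)
    replace h2 := mk_eq_mk''.mp (mk_eq_mk_iff.mpr h2)
    rw [mk_eq_mk'']
    push_cast
    rw [InfMonoid.add_inf, InfMonoid.add_inf]
    have e1 : (↑b' + ↑d') + (a + ↑d) = (↑b + ↑d) + (a' + ↑d') := by
      calc (↑b' + ↑d') + (a + ↑d) = (↑b' + a) + (↑d' + ↑d) := by abel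
        _ = (↑b + a') + (↑d' + ↑d) := by rw [h1]
        _ = (↑b + ↑d) + (a' + ↑d') := by abel
    have e2 : (↑b' + ↑d') + (c + ↑b) = (↑b + ↑d) + (c' + ↑b') := by
      calc (↑b' + ↑d') + (c + ↑b) = (↑d' + c) + (↑b' + ↑b) := by abel
        _ = (↑d + c') + (↑b' + ↑b) := by rw [h2]
        _ = (↑b + ↑d) + (c' + ↑b') := by abel
    rw [e1, e2]

@[simp] lemma inf'_mk (a c : α) (b d : (⊤ : AddSubmonoid α)) :
    inf' (mk a b : H α) (mk c d) = mk ((a + ↑d) ⊓ (c + ↑b)) (b + d) := rfl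

lemma inf'_le_left (x y : H α) : inf' x y ≤ x :=
  AddLocalization.induction_on₂ x y <| by
    rintro ⟨a, b⟩ ⟨c, d⟩
    rw [inf'_mk, mk_le_mk'']
    push_cast
    calc (↑b : α) + ((a + ↑d) ⊓ (c + ↑b)) = (↑b + (a + ↑d)) ⊓ (↑b + (c + ↑b)) := InfMonoid.add_inf ..
      _ ≤ ↑b + (a + ↑d) := inf_le_left
      _ = ↑b + ↑d + a := by abel

lemma inf'_le_right (x y : H α) : inf' x y ≤ y :=
  AddLocalization.induction_on₂ x y <| by
    rintro ⟨a, b⟩ ⟨c, d⟩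
    rw [inf'_mk, mk_le_mk'']
    push_cast
    calc (↑d : α) + ((a + ↑d) ⊓ (c + ↑b)) = (↑d + (a + ↑d)) ⊓ (↑d + (c + ↑b)) := InfMonoid.add_inf ..
      _ ≤ ↑d + (c + ↑b) := inf_le_right
      _ = ↑b + ↑d + c := by abel

lemma le_inf' (x y z : H α) (hx : z ≤ x) (hy : z ≤ y) : z ≤ inf' x y := by
  induction x using AddLocalization.induction_on with | _ p =>
  induction y using AddLocalization.induction_on with | _ q =>
  induction z using AddLocalization.induction_on with | _ r =>
  obtain ⟨a, b⟩ := p; obtain ⟨c, d⟩ := q; obtain ⟨e, f⟩ := r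
  rw [mk_le_mk''] at hx hy
  rw [inf'_mk, mk_le_mk'']
  push_cast
  rw [InfMonoid.add_inf]
  refine le_inf ?_ ?_
  · calc (↑b + ↑d : α) + e = (↑b + e) + ↑d := by abel
      _ ≤ (↑f + a) + ↑d := add_le_add_left hx _
      _ = ↑f + (a + ↑d) := by abel
  · calc (↑b + ↑d : α) + e = (↑d + e) + ↑b := by abel
      _ ≤ (↑f + c) + ↑b := add_le_add_left hy _
      _ = ↑f + (c + ↑b) := by abel

lemma add_inf' (x y z : H α) : z + inf' x y = inf' (z + x) (z + y) := by
  induction x using AddLocalization.induction_on with | _ p =>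
  induction y using AddLocalization.induction_on with | _ q =>
  induction z using AddLocalization.induction_on with | _ r =>
  obtain ⟨a, b⟩ := p; obtain ⟨c, d⟩ := q; obtain ⟨e, f⟩ := r
  rw [inf'_mk, mk_add, mk_add, mk_add, inf'_mk, mk_eq_mk'']
  push_cast
  rw [InfMonoid.add_inf, InfMonoid.add_inf, InfMonoid.add_inf]
  congr 1 <;> abel

lemma le_sup'_left (x y : H α) : x ≤ x + y - inf' x y := by
  rw [le_sub_iff_add_le, add_le_add_iff_left]
  exact inf'_le_right x y

lemma le_sup'_right (x y : H α) : y ≤ x + y - inf' x y := by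
  rw [le_sub_iff_add_le, add_comm x y, add_le_add_iff_left]
  exact inf'_le_left x y

lemma sup'_le (x y z : H α) (hx : x ≤ z) (hy : y ≤ z) : x + y - inf' x y ≤ z := by
  rw [sub_le_iff_le_add, add_inf']
  have h1 : x + y ≤ z + x := by rw [add_comm z x, add_le_add_iff_left]; exact hy
  have h2 : x + y ≤ z + y := by rw [add_le_add_iff_right]; exact hx
  exact le_inf' _ _ _ h1 h2

instance : Lattice (H α) :=
  { (inferInstance : PartialOrder (H α)) with
    inf := inf'
    inf_le_left := inf'_le_left
    inf_le_right := inf'_le_right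
    le_inf := fun a b c h1 h2 => le_inf' b c a h1 h2
    sup := fun x y => x + y - inf' x y
    le_sup_left := le_sup'_left
    le_sup_right := le_sup'_right
    sup_le := sup'_le }

def φ (a : α) : H α := mk a 0

lemma φ_injective : Function.Injective (φ : α → H α) := mk_left_injective 0

lemma φ_add (a b : α) : φ (a + b) = (φ a + φ b : H α) := by
  rw [φ, φ, φ, mk_add, add_zero]

lemma φ_zero : (φ 0 : H α) = 0 := mk_zero

lemma φ_inf (a b : α) : φ (a ⊓ b) = (φ a ⊓ φ b : H α) := by
  rw [show (φ a ⊓ φ b : H α) = inf' (φ a) (φ b) from rfl, φ, φ, φ, inf'_mk]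
  norm_num

lemma φ_le_φ (a b : α) : (φ a : H α) ≤ φ b ↔ a ≤ b := by
  rw [φ, φ, mk_le_mk'']
  norm_num



end GrothLGroupAux

/-- A cancellative commutative monoid equipped with a meet-semilattice order whose meet
is compatible with addition embeds into a lattice-ordered abelian group
(its Grothendieck lattice-ordered group), by a monoid homomorphism preserving the meet
and reflecting the order. -/
theorem grothendieck_lgroup_of_cancellative_meet_monoid {M : Type u}
    [AddCommMonoid M] [SemilatticeInf M]
    (hcompat : ∀ x y z : M, x + (y ⊓ z) = (x + y) ⊓ (x + z))
    (hcancel : ∀ a b x : M, a + x = b + x → a = b) :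
    ∃ (H : Type u) (_ : AddCommGroup H) (_ : Lattice H),
      (∀ x y z : H, x ≤ y → x + z ≤ y + z) ∧
      ∃ φ : M → H, Function.Injective φ ∧
        (∀ a b : M, φ (a + b) = φ a + φ b) ∧ φ 0 = 0 ∧
        (∀ a b : M, φ (a ⊓ b) = φ a ⊓ φ b) ∧
        (∀ a b : M, φ a ≤ φ b ↔ a ≤ b) := by
  letI i1 : AddCancelCommMonoid M :=
    { ‹AddCommMonoid M› with
      add_left_cancel := fun a b c h =>
        hcancel b c a (by rw [add_comm b a, add_comm c a]; exact h) }
  letI i2 : GrothLGroupAux.InfMonoid M :=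
    { i1, ‹SemilatticeInf M› with add_inf := hcompat }
  refine ⟨GrothLGroupAux.H M, inferInstance, inferInstance,
    fun x y z h => add_le_add_left h z,
    GrothLGroupAux.φ, GrothLGroupAux.φ_injective,
    fun a b => GrothLGroupAux.φ_add a b, GrothLGroupAux.φ_zero,
    fun a b => GrothLGroupAux.φ_inf a b,
    fun a b => GrothLGroupAux.φ_le_φ a b⟩
end

section
/- Let G be a (partially) ordered abelian group and ⊢ a regular entailment relation for G. Then there exists a lattice-ordered abelian group H and a group homomorphism φ : G → H such that for all nonempty finite subsets A, B of G: A ⊢ B holds if and only if ⊓_{a∈A} φ(a) ≤ ⊔_{b∈B} φ(b) in H. -/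
open Pointwise Finset

namespace RegEntail

variable {G : Type*} [DecidableEq G] [AddCommGroup G] [PartialOrder G] [IsOrderedAddMonoid G]
variable {r : Finset G → Finset G → Prop}

section
variable (h : IsRegularEntailRel r)
include h

lemma hrefl (a : G) : r {a} {a} := h.toIsEquivEntailRel.toIsEntailRel.refl a

lemma hmono ⦃A B : Finset G⦄ (A' B' : Finset G) (hA : A.Nonempty) (hB : B.Nonempty)
    (hr : r A B) : r (A ∪ A') (B ∪ B') :=
  h.toIsEquivEntailRel.toIsEntailRel.mono A' B' hA hB hr

lemma htrans ⦃A B : Finset G⦄ ⦃c : G⦄ (hA : A.Nonempty) (hB : B.Nonempty)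
    (h1 : r A (insert c B)) (h2 : r (insert c A) B) : r A B :=
  h.toIsEquivEntailRel.toIsEntailRel.trans hA hB h1 h2

lemma hequiv ⦃A B : Finset G⦄ (x : G) (hA : A.Nonempty) (hB : B.Nonempty) (hr : r A B) :
    r (A.image (fun a => x + a)) (B.image (fun b => x + b)) :=
  h.toIsEquivEntailRel.equivariant x hA hB hr

/-- weakening -/
lemma wk {A B A' B' : Finset G} (hA : A.Nonempty) (hB : B.Nonempty)
    (hAA : A ⊆ A') (hBB : B ⊆ B') (hr : r A B) : r A' B' := by
  have := hmono h A' B' hA hB hr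
  rwa [Finset.union_eq_right.mpr hAA, Finset.union_eq_right.mpr hBB] at this

lemma mem1 {a : G} {B : Finset G} (ha : a ∈ B) : r {a} B :=
  wk h (Finset.singleton_nonempty a) (Finset.singleton_nonempty a)
    (le_refl _) (Finset.singleton_subset_iff.mpr ha) (hrefl h a)

/-- translation, in sumset form -/
lemma trL (x : G) {A B : Finset G} (hA : A.Nonempty) (hB : B.Nonempty) (hr : r A B) :
    r ({x} + A) ({x} + B) := by
  have := hequiv h x hA hB hr
  rwa [show A.image (fun a => x + a) = {x} + A from by rw [Finset.singleton_add]; rfl,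
    show B.image (fun b => x + b) = {x} + B from by rw [Finset.singleton_add]; rfl] at this

/-- multi-cut on the right -/
lemma cutR {A B : Finset G} (hA : A.Nonempty) (hB : B.Nonempty) :
    ∀ (C : Finset G), r A (B ∪ C) → (∀ c ∈ C, r (insert c A) B) → r A B := by
  intro C
  induction C using Finset.induction_on with
  | empty => simpa using id
  | @insert c C' hc ih =>
    intro h1 h2
    have h1' : r A (insert c (B ∪ C')) := by
      rwa [show B ∪ insert c C' = insert c (B ∪ C') from by
        rw [Finset.union_insert]] at h1
    have step : r A (B ∪ C') := by
      apply htrans h hA (hB.mono Finset.subset_union_left) h1'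
      exact wk h ((Finset.insert_nonempty c A)) hB (le_refl _) Finset.subset_union_left
        (h2 c (Finset.mem_insert_self c C'))
    exact ih step (fun c' hc' => h2 c' (Finset.mem_insert_of_mem hc'))

/-- singleton-left statements add -/
lemma addCompose {u v : G} {S T : Finset G} (hS : S.Nonempty) (hT : T.Nonempty)
    (h1 : r {u} S) (h2 : r {v} T) : r {u + v} (S + T) := by
  have step1 : r {v + u} ({v} + S) := by
    have := trL h v (Finset.singleton_nonempty u) hS h1
    rwa [Finset.singleton_add_singleton] at this
  apply cutR h (Finset.singleton_nonempty (u+v)) (hS.add hT) ({v} + S)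
  · apply wk h (Finset.singleton_nonempty (v+u)) ((Finset.singleton_nonempty v).add hS) _
      Finset.subset_union_right step1
    rw [add_comm v u]
  · intro c hc
    rw [Finset.singleton_add] at hc
    obtain ⟨s, hs, rfl⟩ := Finset.mem_vadd_finset.mp hc
    have : r {s + v} ({s} + T) := by
      have := trL h s (Finset.singleton_nonempty v) hT h2
      rwa [Finset.singleton_add_singleton] at this
    apply wk h (Finset.singleton_nonempty (s+v)) ((Finset.singleton_nonempty s).add hT) _ _ this
    · intro x hx
      simp only [Finset.mem_singleton] at hx
      subst hx
      exact Finset.mem_insert.mpr (Or.inl (by simp only [vadd_eq_add]; exact add_comm s v))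
    · exact Finset.add_subset_add_right (Finset.singleton_subset_iff.mpr hs)

/-- the Σ-rule: two lists of equal length and equal sum entail each other. -/
lemma sigma : ∀ (l2 l1 : List G), l1 ≠ [] → l1.length = l2.length →
    l1.sum = l2.sum → r l1.toFinset l2.toFinset := by
  intro l2
  induction l2 with
  | nil =>
    intro l1 hne hlen _
    cases l1 with
    | nil => exact absurd rfl hne
    | cons a t => simp at hlen
  | cons b l2' ih =>
    intro l1 hne hlen hsum
    cases l2' with
    | nil =>
      cases l1 with
      | nil => exact absurd rfl hne
      | cons a t =>
        cases t with
        | nil =>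
          simp only [List.sum_cons, List.sum_nil, add_zero] at hsum
          subst hsum
          simpa using hrefl h a
        | cons a2 t2 => simp at hlen
    | cons b2 l2'' =>
      cases l1 with
      | nil => exact absurd rfl hne
      | cons a1 t =>
        cases t with
        | nil => simp at hlen
        | cons a2 l1'' =>
          set c := a1 + a2 - b with hc
          have hsum' : (c :: l1'').sum = (b2 :: l2'').sum := by
            simp only [List.sum_cons] at hsum ⊢
            have : c + l1''.sum = a1 + (a2 + l1''.sum) - b := by rw [hc]; abel
            rw [this, hsum]; abel
          have ihr := ih (c :: l1'') (by simp) (by simpa using Nat.succ_injective (by simpa using hlen)) hsum'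
          have hreg : r {a1, a2} {b, c} := by
            have := h.regular a1 (a1 + a2 - b) 0 (b - a1)
            have e1 : 0 + a1 = a1 := zero_add a1
            have e2 : b - a1 + (a1 + a2 - b) = a2 := by abel
            have e3 : b - a1 + a1 = b := by abel
            have e4 : 0 + (a1 + a2 - b) = a1 + a2 - b := zero_add _
            rw [e1, e2, e3, e4] at this
            exact this
          have hA : ((a1 :: a2 :: l1'').toFinset : Finset G).Nonempty := by simp
          have hB : ((b :: b2 :: l2'').toFinset : Finset G).Nonempty := by simp
          apply htrans h (c := c) hA hB
          · apply wk h (by simp : ({a1, a2} : Finset G).Nonempty) (by simp : ({b, c} : Finset G).Nonempty)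
              ?_ ?_ hreg
            · intro x hx; simp only [Finset.mem_insert, Finset.mem_singleton] at hx
              rcases hx with rfl | rfl <;> simp
            · intro x hx; simp only [Finset.mem_insert, Finset.mem_singleton] at hx
              rcases hx with rfl | rfl <;> simp
          · apply wk h (by simp : ((c :: l1'').toFinset : Finset G).Nonempty)
              (by simp : ((b2 :: l2'').toFinset : Finset G).Nonempty) ?_ ?_ ihr
            · intro x hx; simp at hx ⊢; tauto
            · intro x hx; simp at hx ⊢; tauto

omit h in
lemma exists_cycle (f : G → G) (K : Finset G) (hK : K.Nonempty) (hf : ∀ k ∈ K, f k ∈ K) :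
    ∃ k ∈ K, ∃ m, 0 < m ∧ f^[m] k = k := by
  obtain ⟨k₀, hk₀⟩ := hK
  have hit : ∀ t, f^[t] k₀ ∈ K := by
    intro t
    induction t with
    | zero => simpa using hk₀
    | succ n ihn => rw [Function.iterate_succ_apply']; exact hf _ ihn
  obtain ⟨i, hi, j, hj, hne, heq⟩ :=
    Finset.exists_ne_map_eq_of_card_lt_of_maps_to
      (s := Finset.range (K.card + 1)) (t := K)
      (by simp) (fun i _ => hit i)
  rcases Nat.lt_or_ge i j with hij | hij
  · exact ⟨f^[i] k₀, hit i, j - i, by omega, by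
      rw [← Function.iterate_add_apply, Nat.sub_add_cancel (le_of_lt hij), heq]⟩
  · have hij' : j < i := by omega
    exact ⟨f^[j] k₀, hit j, i - j, by omega, by
      rw [← Function.iterate_add_apply, Nat.sub_add_cancel (le_of_lt hij'), ← heq]⟩

omit h in
lemma listsum (F : ℕ → G) (m : ℕ) :
    ((List.range m).map F).sum = ∑ i ∈ Finset.range m, F i := by
  induction m with
  | zero => simp
  | succ n ihn => rw [List.range_succ, Finset.sum_range_succ]; simp [ihn]

lemma selectAux (X Y K : Finset G) (hX : X.Nonempty) (hY : Y.Nonempty) (hK : K.Nonempty)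
    (hyp : ∀ k ∈ K, r X ({-k} + (Y + K))) :
    ∀ (Kr : Finset G), Kr ⊆ K → ∀ f y : G → G,
      (∀ k ∈ K \ Kr, f k ∈ K ∧ y k ∈ Y) →
      r (X ∪ (K \ Kr).image (fun k => y k + (f k - k))) Y := by
  intro Kr
  induction Kr using Finset.induction_on with
  | empty =>
    intro _ f y hc
    rw [Finset.sdiff_empty] at hc ⊢
    obtain ⟨k₀, hk₀, m, hm, hfix⟩ := exists_cycle f K hK (fun k hk => (hc k hk).1)
    have hit : ∀ t, f^[t] k₀ ∈ K := by
      intro t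
      induction t with
      | zero => simpa using hk₀
      | succ n ihn => rw [Function.iterate_succ_apply']; exact (hc _ ihn).1
    set g : G → G := fun k => y k + (f k - k) with hg
    set L1 : List G := (List.range m).map (fun t => g (f^[t] k₀)) with hL1
    set L2 : List G := (List.range m).map (fun t => y (f^[t] k₀)) with hL2
    have hsum : L1.sum = L2.sum := by
      rw [hL1, hL2, listsum (fun t => g (f^[t] k₀)) m, listsum (fun t => y (f^[t] k₀)) m]
      have : ∀ t, g (f^[t] k₀) = y (f^[t] k₀) + (f^[t+1] k₀ - f^[t] k₀) := by
        intro t; rw [hg, Function.iterate_succ_apply']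
      simp only [this]
      rw [Finset.sum_add_distrib, Finset.sum_range_sub (fun t => f^[t] k₀) m, hfix]
      simp
    have hL1ne : L1 ≠ [] := by
      rw [hL1]; simp only [ne_eq, List.map_eq_nil_iff, List.range_eq_nil]; omega
    have hr := sigma h L2 L1 hL1ne (by rw [hL1, hL2]; simp) hsum
    have hL1n : L1.toFinset.Nonempty := by
      simpa [List.toFinset_nonempty_iff] using hL1ne
    have hL2n : L2.toFinset.Nonempty := by
      rw [hL2]; simp only [List.toFinset_nonempty_iff, ne_eq, List.map_eq_nil_iff,
        List.range_eq_nil]; omega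
    have hs1 : L1.toFinset ⊆ X ∪ K.image g := by
      intro x hx
      rw [hL1] at hx
      simp only [List.mem_toFinset, List.mem_map, List.mem_range] at hx
      obtain ⟨t, _, rfl⟩ := hx
      exact Finset.mem_union_right _ (Finset.mem_image_of_mem g (hit t))
    have hs2 : L2.toFinset ⊆ Y := by
      intro x hx
      rw [hL2] at hx
      simp only [List.mem_toFinset, List.mem_map, List.mem_range] at hx
      obtain ⟨t, _, rfl⟩ := hx
      exact (hc _ (hit t)).2
    exact wk h hL1n hL2n hs1 hs2 hr
  | @insert k₀ Kr' hk₀Kr' ih =>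
    intro hsub f y hc
    have hk₀K : k₀ ∈ K := hsub (Finset.mem_insert_self _ _)
    have hsub' : Kr' ⊆ K := fun x hx => hsub (Finset.mem_insert_of_mem hx)
    set S : Finset G := K \ insert k₀ Kr' with hS
    set g : G → G := fun k => y k + (f k - k) with hg
    have hk₀S : k₀ ∉ S := by rw [hS]; simp
    have hSins : insert k₀ S = K \ Kr' := by
      rw [hS, Finset.sdiff_insert, Finset.insert_erase]
      exact Finset.mem_sdiff.mpr ⟨hk₀K, hk₀Kr'⟩
    set L : Finset G := X ∪ S.image g with hL
    have hLne : L.Nonempty := hX.mono (by rw [hL]; exact Finset.subset_union_left)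
    have h1 : r L (Y ∪ ({-k₀} + (Y + K))) :=
      wk h hX (((Finset.singleton_nonempty _).add (hY.add hK)))
        (by rw [hL]; exact Finset.subset_union_left) Finset.subset_union_right (hyp k₀ hk₀K)
    apply cutR h hLne hY _ h1
    intro cc hcc
    rw [Finset.singleton_add] at hcc
    obtain ⟨w, hw, rfl⟩ := Finset.mem_vadd_finset.mp hcc
    obtain ⟨y', hy', k', hk', rfl⟩ := Finset.mem_add.mp hw
    set f2 : G → G := Function.update f k₀ k' with hf2
    set y2 : G → G := Function.update y k₀ y' with hy2
    have hcond : ∀ k ∈ K \ Kr', f2 k ∈ K ∧ y2 k ∈ Y := by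
      intro k hk
      rcases eq_or_ne k k₀ with rfl | hne
      · rw [hf2, hy2]; simp [Function.update_self]; exact ⟨hk', hy'⟩
      · rw [hf2, hy2]
        rw [Function.update_of_ne hne, Function.update_of_ne hne]
        exact hc k (by rw [hS] at *; simp only [Finset.mem_sdiff] at hk ⊢
                       exact ⟨hk.1, by simp only [Finset.mem_insert]; tauto⟩)
    have ihr := ih hsub' f2 y2 hcond
    apply wk h _ hY _ (le_refl _) ihr
    · exact hX.mono (Finset.subset_union_left)
    · rw [← hSins]
      intro x hx
      rcases Finset.mem_union.mp hx with hx | hx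
      · exact Finset.mem_insert_of_mem (by rw [hL]; exact Finset.mem_union_left _ hx)
      · rw [Finset.image_insert] at hx
        rcases Finset.mem_insert.mp hx with rfl | hx
        · have he : y2 k₀ + (f2 k₀ - k₀) = -k₀ +ᵥ (y' + k') := by
            rw [hf2, hy2]; simp only [Function.update_self, vadd_eq_add]; abel
          rw [he]
          exact Finset.mem_insert_self _ _
        · apply Finset.mem_insert_of_mem
          rw [hL]
          apply Finset.mem_union_right
          have : ∀ z ∈ S, g z = y2 z + (f2 z - z) := by
            intro z hz
            have hzne : z ≠ k₀ := by rintro rfl; exact hk₀S hz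
            rw [hg, hf2, hy2, Function.update_of_ne hzne, Function.update_of_ne hzne]
          obtain ⟨z, hz, rfl⟩ := Finset.mem_image.mp hx
          rw [← this z hz]
          exact Finset.mem_image_of_mem g hz

/-- Lorenzen's cancellation theorem for regular entailment relations. -/
lemma cancelSet (X Y K : Finset G) (hX : X.Nonempty) (hY : Y.Nonempty) (hK : K.Nonempty)
    (hyp : ∀ k ∈ K, r ({k} + X) (Y + K)) : r X Y := by
  have hyp' : ∀ k ∈ K, r X ({-k} + (Y + K)) := by
    intro k hk
    have := trL h (-k) ((Finset.singleton_nonempty k).add hX) (hY.add hK) (hyp k hk)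
    rwa [show ({-k} : Finset G) + ({k} + X) = X from by
      rw [← add_assoc, Finset.singleton_add_singleton, neg_add_cancel]
      ext t; simp [Finset.mem_add, Finset.singleton_add]] at this
  have := selectAux h X Y K hX hY hK hyp' K (le_refl _) id id (by simp)
  simpa using this

/-- the opposite relation -/
lemma opp : IsRegularEntailRel (fun A B : Finset G => r (-B) (-A)) := by
  constructor
  case regular =>
    intro a b x y
    have := h.regular (-a) (-b) (-y) (-x)
    simp only [show ∀ u v : G, -u + -v = -(u+v) from fun u v => (neg_add u v).symm] at this
    have e : ∀ (s t : G), -({s, t} : Finset G) = {-s, -t} := by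
      intro s t; rw [Finset.insert_eq, Finset.neg_def, Finset.image_union]
      rfl
    simp only [e]
    exact this
  constructor
  case le_entail =>
    intro a b hab
    simp only [Finset.neg_singleton]
    exact h.toIsEquivEntailRel.le_entail (neg_le_neg hab)
  case equivariant =>
    intro A B x hA hB hr
    have := hequiv h (-x) (hB.neg) (hA.neg) hr
    have e : ∀ C : Finset G, (-C).image (fun a => -x + a) = -(C.image (fun a => x + a)) := by
      intro C
      rw [Finset.neg_def, Finset.neg_def, Finset.image_image, Finset.image_image]
      apply Finset.image_congr
      intro z _
      show -x + -z = -(x + z)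
      abel
    rwa [e, e] at this
  constructor
  case refl => intro a; simpa using hrefl h (-a)
  case mono =>
    intro A B A' B' hA hB hr
    have e : ∀ C C' : Finset G, -(C ∪ C') = -C ∪ -C' := by
      intro C C'; rw [Finset.neg_def, Finset.neg_def, Finset.neg_def, Finset.image_union]
    rw [e, e]
    exact hmono h _ _ hB.neg hA.neg hr
  case trans =>
    intro A B c hA hB h1 h2
    have e : ∀ (d : G) (C : Finset G), -(insert d C) = insert (-d) (-C) := by
      intro d C; rw [Finset.insert_eq, Finset.insert_eq]
      rw [Finset.neg_def, Finset.neg_def, Finset.image_union]; simp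
    rw [e] at h1 h2
    exact htrans h hB.neg hA.neg h2 h1

/-- cancellation on the meet side -/
lemma dualCancel (X Y K : Finset G) (hX : X.Nonempty) (hY : Y.Nonempty) (hK : K.Nonempty)
    (hyp : ∀ k ∈ K, r (X + K) ({k} + Y)) : r X Y := by
  have hnegadd : ∀ C D : Finset G, -(C + D) = -C + -D := by
    intro C D
    ext t
    simp only [Finset.mem_neg, Finset.mem_add]
    constructor
    · rintro ⟨y, ⟨u, hu, v, hv, rfl⟩, rfl⟩
      exact ⟨-u, ⟨u, hu, rfl⟩, -v, ⟨v, hv, rfl⟩, (neg_add u v).symm⟩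
    · rintro ⟨u, ⟨u', hu', rfl⟩, v, ⟨v', hv', rfl⟩, rfl⟩
      exact ⟨u' + v', ⟨u', hu', v', hv', rfl⟩, neg_add u' v'⟩
  have main := cancelSet (opp h) (-Y) (-X) (-K) hY.neg hX.neg hK.neg ?_
  · simpa using main
  · intro k hk
    rw [Finset.mem_neg] at hk
    obtain ⟨k', hk', rfl⟩ := hk
    show r (-(-X + -K)) (-({-k'} + -Y))
    rw [hnegadd, hnegadd]
    simpa using hyp k' hk'

/-! ### the construction of the lattice-ordered group -/

omit h in
lemma addcomm4 (A B C D : Finset G) : (A + B) + (C + D) = (A + D) + (C + B) := by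
  rw [add_add_add_comm, add_add_add_comm A D C B, add_comm B D]

/-- formal differences `sup A - sup B` -/
def PP (G : Type*) := {p : Finset G × Finset G // p.1.Nonempty ∧ p.2.Nonempty}

variable (r) in
def ple (p q : PP G) : Prop := ∀ t ∈ p.1.1 + q.1.2, r {t} (q.1.1 + p.1.2)

omit h in
lemma ple_of_eq {p q : PP G} (h1 : p.1.1 = q.1.1) (h2 : p.1.2 = q.1.2)
    (hr : ple r p p) : ple r p q := by
  unfold ple at *
  rw [← h1, ← h2]
  exact hr

lemma ple_refl (p : PP G) : ple r p p := fun t ht => mem1 h ht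

lemma ple_trans {p q s : PP G} (h1 : ple r p q) (h2 : ple r q s) : ple r p s := by
  obtain ⟨⟨A, B⟩, hA, hB⟩ := p
  obtain ⟨⟨C, D⟩, hC, hD⟩ := q
  obtain ⟨⟨E, F⟩, hE, hF⟩ := s
  intro t ht
  simp only [ple] at h1 h2 ⊢
  apply cancelSet h {t} (E + B) (C + D) (Finset.singleton_nonempty t) (hE.add hB) (hC.add hD)
  intro k hk
  obtain ⟨c, hc, d, hd, rfl⟩ := Finset.mem_add.mp hk
  obtain ⟨a, ha, f, hf, rfl⟩ := Finset.mem_add.mp ht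
  have e1 : r {a + d} (C + B) := h1 _ (Finset.add_mem_add ha hd)
  have e2 : r {c + f} (E + D) := h2 _ (Finset.add_mem_add hc hf)
  have := addCompose h (hC.add hB) (hE.add hD) e1 e2
  rw [Finset.singleton_add_singleton]
  have el : c + d + (a + f) = a + d + (c + f) := by abel
  have er : (C + B) + (E + D) = (E + B) + (C + D) := by
    rw [addcomm4 C B E D, add_comm (C + D) (E + B)]
  rw [el, ← er]
  exact this

/-- addition respects the order -/
lemma ple_add {p q s : PP G} (h1 : ple r p q) : ple r ⟨(p.1.1 + s.1.1, p.1.2 + s.1.2),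
    ⟨p.2.1.add s.2.1, p.2.2.add s.2.2⟩⟩ ⟨(q.1.1 + s.1.1, q.1.2 + s.1.2),
    ⟨q.2.1.add s.2.1, q.2.2.add s.2.2⟩⟩ := by
  obtain ⟨⟨A, B⟩, hA, hB⟩ := p
  obtain ⟨⟨C, D⟩, hC, hD⟩ := q
  obtain ⟨⟨X, Y⟩, hX, hY⟩ := s
  intro t ht
  simp only at ht ⊢
  obtain ⟨w, hw, z, hz, rfl⟩ := Finset.mem_add.mp ht
  obtain ⟨a, ha, x, hx, rfl⟩ := Finset.mem_add.mp hw
  obtain ⟨d, hd, y, hy, rfl⟩ := Finset.mem_add.mp hz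
  have e1 : r {a + d} (C + B) := h1 _ (Finset.add_mem_add ha hd)
  have := trL h (x + y) (Finset.singleton_nonempty _) (hC.add hB) e1
  rw [Finset.singleton_add_singleton] at this
  apply wk h (Finset.singleton_nonempty _) (((Finset.singleton_nonempty (x+y)).add (hC.add hB)))
    ?_ ?_ this
  · intro u hu
    simp only [Finset.mem_singleton] at hu
    subst hu
    simp only [Finset.mem_singleton]
    abel_nf
  · intro u hu
    rw [Finset.singleton_add] at hu
    obtain ⟨v, hv, rfl⟩ := Finset.mem_vadd_finset.mp hu
    obtain ⟨c, hc, b, hb, rfl⟩ := Finset.mem_add.mp hv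
    have : (x + y) +ᵥ (c + b) = (c + x) + (b + y) := by simp only [vadd_eq_add]; abel
    rw [this]
    exact Finset.add_mem_add (Finset.add_mem_add hc hx) (Finset.add_mem_add hb hy)

omit h in
lemma pp_ext {p q : PP G} (h1 : p.1.1 = q.1.1) (h2 : p.1.2 = q.1.2) : p = q := by
  apply Subtype.ext
  exact Prod.ext h1 h2

def padd (p q : PP G) : PP G :=
  ⟨(p.1.1 + q.1.1, p.1.2 + q.1.2), ⟨p.2.1.add q.2.1, p.2.2.add q.2.2⟩⟩

def pneg (p : PP G) : PP G := ⟨(p.1.2, p.1.1), ⟨p.2.2, p.2.1⟩⟩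

def pzero : PP G := ⟨({0}, {0}), ⟨Finset.singleton_nonempty _, Finset.singleton_nonempty _⟩⟩

def psup (p q : PP G) : PP G :=
  ⟨((p.1.1 + q.1.2) ∪ (q.1.1 + p.1.2), p.1.2 + q.1.2),
   ⟨((p.2.1.add q.2.2).mono Finset.subset_union_left), p.2.2.add q.2.2⟩⟩

def pinf (p q : PP G) : PP G :=
  ⟨(p.1.1 + q.1.1, (p.1.2 + q.1.1) ∪ (p.1.1 + q.1.2)),
   ⟨p.2.1.add q.2.1, ((p.2.2.add q.2.1).mono Finset.subset_union_left)⟩⟩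

lemma ple_add' {p q s : PP G} (h1 : ple r p q) : ple r (padd p s) (padd q s) := ple_add h h1

omit h in
lemma padd_comm (p q : PP G) : padd p q = padd q p :=
  pp_ext (add_comm _ _) (add_comm _ _)

lemma le_psup_left (p q : PP G) : ple r p (psup p q) := by
  obtain ⟨⟨A, B⟩, hA, hB⟩ := p
  obtain ⟨⟨C, D⟩, hC, hD⟩ := q
  intro t ht
  simp only [psup] at ht ⊢
  apply mem1 h
  obtain ⟨a, ha, w, hw, rfl⟩ := Finset.mem_add.mp ht
  obtain ⟨b, hb, d, hd, rfl⟩ := Finset.mem_add.mp hw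
  have : a + (b + d) = (a + d) + b := by abel
  rw [this]
  exact Finset.add_mem_add (Finset.mem_union_left _ (Finset.add_mem_add ha hd)) hb

lemma le_psup_right (p q : PP G) : ple r q (psup p q) := by
  obtain ⟨⟨A, B⟩, hA, hB⟩ := p
  obtain ⟨⟨C, D⟩, hC, hD⟩ := q
  intro t ht
  simp only [psup] at ht ⊢
  apply mem1 h
  obtain ⟨c, hc, w, hw, rfl⟩ := Finset.mem_add.mp ht
  obtain ⟨b, hb, d, hd, rfl⟩ := Finset.mem_add.mp hw
  have : c + (b + d) = (c + b) + d := by abel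
  rw [this]
  exact Finset.add_mem_add (Finset.mem_union_right _ (Finset.add_mem_add hc hb)) hd

lemma psup_le {p q z : PP G} (h1 : ple r p z) (h2 : ple r q z) : ple r (psup p q) z := by
  obtain ⟨⟨A, B⟩, hA, hB⟩ := p
  obtain ⟨⟨C, D⟩, hC, hD⟩ := q
  obtain ⟨⟨E, F⟩, hE, hF⟩ := z
  intro t ht
  simp only [psup] at ht ⊢
  obtain ⟨w, hw, f, hf, rfl⟩ := Finset.mem_add.mp ht
  rcases Finset.mem_union.mp hw with hw | hw
  · obtain ⟨a, ha, d, hd, rfl⟩ := Finset.mem_add.mp hw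
    have e1 : r {a + f} (E + B) := h1 _ (Finset.add_mem_add ha hf)
    have := trL h d (Finset.singleton_nonempty _) (hE.add hB) e1
    rw [Finset.singleton_add_singleton] at this
    apply wk h (Finset.singleton_nonempty _)
      ((Finset.singleton_nonempty d).add (hE.add hB)) ?_ ?_ this
    · intro u hu; simp only [Finset.mem_singleton] at hu; subst hu
      simp only [Finset.mem_singleton]; abel_nf
    · intro u hu
      rw [Finset.singleton_add] at hu
      obtain ⟨v, hv, rfl⟩ := Finset.mem_vadd_finset.mp hu
      obtain ⟨e, he, b, hb, rfl⟩ := Finset.mem_add.mp hv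
      have : d +ᵥ (e + b) = e + (b + d) := by simp only [vadd_eq_add]; abel
      rw [this]
      exact Finset.add_mem_add he (Finset.add_mem_add hb hd)
  · obtain ⟨c, hc, b, hb, rfl⟩ := Finset.mem_add.mp hw
    have e1 : r {c + f} (E + D) := h2 _ (Finset.add_mem_add hc hf)
    have := trL h b (Finset.singleton_nonempty _) (hE.add hD) e1
    rw [Finset.singleton_add_singleton] at this
    apply wk h (Finset.singleton_nonempty _)
      ((Finset.singleton_nonempty b).add (hE.add hD)) ?_ ?_ this
    · intro u hu; simp only [Finset.mem_singleton] at hu; subst hu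
      simp only [Finset.mem_singleton]; abel_nf
    · intro u hu
      rw [Finset.singleton_add] at hu
      obtain ⟨v, hv, rfl⟩ := Finset.mem_vadd_finset.mp hu
      obtain ⟨e, he, d, hd, rfl⟩ := Finset.mem_add.mp hv
      have : b +ᵥ (e + d) = e + (b + d) := by simp only [vadd_eq_add]; abel
      rw [this]
      exact Finset.add_mem_add he (Finset.add_mem_add hb hd)

lemma pinf_le_left (p q : PP G) : ple r (pinf p q) p := by
  obtain ⟨⟨A, B⟩, hA, hB⟩ := p
  obtain ⟨⟨C, D⟩, hC, hD⟩ := q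
  intro t ht
  simp only [pinf] at ht ⊢
  apply mem1 h
  obtain ⟨w, hw, b, hb, rfl⟩ := Finset.mem_add.mp ht
  obtain ⟨a, ha, c, hc, rfl⟩ := Finset.mem_add.mp hw
  have : (a + c) + b = a + (b + c) := by abel
  rw [this]
  exact Finset.add_mem_add ha (Finset.mem_union_left _ (Finset.add_mem_add hb hc))

lemma pinf_le_right (p q : PP G) : ple r (pinf p q) q := by
  obtain ⟨⟨A, B⟩, hA, hB⟩ := p
  obtain ⟨⟨C, D⟩, hC, hD⟩ := q
  intro t ht
  simp only [pinf] at ht ⊢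
  apply mem1 h
  obtain ⟨w, hw, d, hd, rfl⟩ := Finset.mem_add.mp ht
  obtain ⟨a, ha, c, hc, rfl⟩ := Finset.mem_add.mp hw
  have : (a + c) + d = c + (a + d) := by abel
  rw [this]
  exact Finset.add_mem_add hc (Finset.mem_union_right _ (Finset.add_mem_add ha hd))

lemma le_pinf {p q z : PP G} (h1 : ple r z p) (h2 : ple r z q) : ple r z (pinf p q) := by
  obtain ⟨⟨A, B⟩, hA, hB⟩ := p
  obtain ⟨⟨C, D⟩, hC, hD⟩ := q
  obtain ⟨⟨E, F⟩, hE, hF⟩ := z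
  intro t ht
  simp only [pinf] at ht ⊢
  obtain ⟨e, he, w, hw, rfl⟩ := Finset.mem_add.mp ht
  rcases Finset.mem_union.mp hw with hw | hw
  · obtain ⟨b, hb, c, hc, rfl⟩ := Finset.mem_add.mp hw
    have e1 : r {e + b} (A + F) := h1 _ (Finset.add_mem_add he hb)
    have := trL h c (Finset.singleton_nonempty _) (hA.add hF) e1
    rw [Finset.singleton_add_singleton] at this
    apply wk h (Finset.singleton_nonempty _)
      ((Finset.singleton_nonempty c).add (hA.add hF)) ?_ ?_ this
    · intro u hu; simp only [Finset.mem_singleton] at hu; subst hu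
      simp only [Finset.mem_singleton]; abel_nf
    · intro u hu
      rw [Finset.singleton_add] at hu
      obtain ⟨v, hv, rfl⟩ := Finset.mem_vadd_finset.mp hu
      obtain ⟨a, ha, f, hf, rfl⟩ := Finset.mem_add.mp hv
      have : c +ᵥ (a + f) = (a + c) + f := by simp only [vadd_eq_add]; abel
      rw [this]
      exact Finset.add_mem_add (Finset.add_mem_add ha hc) hf
  · obtain ⟨a, ha, d, hd, rfl⟩ := Finset.mem_add.mp hw
    have e1 : r {e + d} (C + F) := h2 _ (Finset.add_mem_add he hd)
    have := trL h a (Finset.singleton_nonempty _) (hC.add hF) e1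
    rw [Finset.singleton_add_singleton] at this
    apply wk h (Finset.singleton_nonempty _)
      ((Finset.singleton_nonempty a).add (hC.add hF)) ?_ ?_ this
    · intro u hu; simp only [Finset.mem_singleton] at hu; subst hu
      simp only [Finset.mem_singleton]; abel_nf
    · intro u hu
      rw [Finset.singleton_add] at hu
      obtain ⟨v, hv, rfl⟩ := Finset.mem_vadd_finset.mp hu
      obtain ⟨c, hc, f, hf, rfl⟩ := Finset.mem_add.mp hv
      have : a +ᵥ (c + f) = (a + c) + f := by simp only [vadd_eq_add]; abel
      rw [this]
      exact Finset.add_mem_add (Finset.add_mem_add ha hc) hf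

lemma pneg_add_cancel_le (p : PP G) : ple r (padd (pneg p) p) pzero := by
  obtain ⟨⟨A, B⟩, hA, hB⟩ := p
  intro t ht
  simp only [padd, pneg, pzero] at ht ⊢
  apply mem1 h
  obtain ⟨w, hw, z, hz, rfl⟩ := Finset.mem_add.mp ht
  simp only [Finset.mem_singleton] at hz
  subst hz
  rw [add_zero]
  rw [Finset.singleton_add]
  obtain ⟨b, hb, a, ha, rfl⟩ := Finset.mem_add.mp hw
  apply Finset.mem_vadd_finset.mpr
  exact ⟨a + b, Finset.add_mem_add ha hb, by simp only [vadd_eq_add]; abel⟩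

lemma pzero_le_pneg_add_cancel (p : PP G) : ple r pzero (padd (pneg p) p) := by
  obtain ⟨⟨A, B⟩, hA, hB⟩ := p
  intro t ht
  simp only [padd, pneg, pzero] at ht ⊢
  apply mem1 h
  rw [Finset.singleton_add] at ht
  obtain ⟨v, hv, rfl⟩ := Finset.mem_vadd_finset.mp ht
  obtain ⟨a, ha, b, hb, rfl⟩ := Finset.mem_add.mp hv
  have : (0:G) +ᵥ (a + b) = (b + a) + 0 := by simp only [vadd_eq_add]; abel
  rw [this]
  exact Finset.add_mem_add (Finset.add_mem_add hb ha) (Finset.mem_singleton_self 0)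

def pSetoid : Setoid (PP G) :=
  ⟨fun p q => ple r p q ∧ ple r q p,
   fun p => ⟨ple_refl h p, ple_refl h p⟩,
   fun hpq => ⟨hpq.2, hpq.1⟩,
   fun hpq hqs => ⟨ple_trans h hpq.1 hqs.1, ple_trans h hqs.2 hpq.2⟩⟩

abbrev HQ := Quotient (pSetoid h)

def qmk (p : PP G) : HQ h := Quotient.mk (pSetoid h) p

lemma padd_congr {p p' q q' : PP G} (hp : ple r p p' ∧ ple r p' p)
    (hq : ple r q q' ∧ ple r q' q) : ple r (padd p q) (padd p' q') := by
  apply ple_trans h (ple_add' h hp.1 (s := q))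
  have := ple_add' h hq.1 (s := p')
  rw [show padd q p' = padd p' q from padd_comm q p',
    show padd q' p' = padd p' q' from padd_comm q' p'] at this
  exact this

def qadd : HQ h → HQ h → HQ h :=
  Quotient.map₂ padd (fun p p' hp q q' hq =>
    ⟨padd_congr h hp hq, padd_congr h ⟨hp.2, hp.1⟩ ⟨hq.2, hq.1⟩⟩)

lemma pneg_mono {p q : PP G} (hle : ple r q p) : ple r (pneg p) (pneg q) := by
  intro t ht
  simp only [pneg] at ht ⊢
  rw [add_comm]
  exact hle t (by rwa [add_comm] at ht)

def qneg : HQ h → HQ h :=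
  Quotient.map pneg (fun p q hpq => ⟨pneg_mono h hpq.2, pneg_mono h hpq.1⟩)

def qle : HQ h → HQ h → Prop :=
  Quotient.lift₂ (ple r) (fun _ _ _ _ hp hq => propext
    ⟨fun hle => ple_trans h (ple_trans h hp.2 hle) hq.1,
     fun hle => ple_trans h (ple_trans h hp.1 hle) hq.2⟩)

def qsup : HQ h → HQ h → HQ h :=
  Quotient.map₂ psup (fun p p' hp q q' hq =>
    ⟨psup_le h (ple_trans h hp.1 (le_psup_left h p' q')) (ple_trans h hq.1 (le_psup_right h p' q')),
     psup_le h (ple_trans h hp.2 (le_psup_left h p q)) (ple_trans h hq.2 (le_psup_right h p q))⟩)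

def qinf : HQ h → HQ h → HQ h :=
  Quotient.map₂ pinf (fun p p' hp q q' hq =>
    ⟨le_pinf h (ple_trans h (pinf_le_left h p q) hp.1) (ple_trans h (pinf_le_right h p q) hq.1),
     le_pinf h (ple_trans h (pinf_le_left h p' q') hp.2) (ple_trans h (pinf_le_right h p' q') hq.2)⟩)

omit h in
lemma sadd_zero (A : Finset G) : A + {0} = A := by
  ext t
  simp only [Finset.mem_add, Finset.mem_singleton]
  constructor
  · rintro ⟨a, ha, z, rfl, rfl⟩; simpa using ha
  · intro ht; exact ⟨t, ht, 0, rfl, add_zero t⟩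

omit h in
lemma zero_sadd (A : Finset G) : ({0} : Finset G) + A = A := by
  rw [add_comm, sadd_zero]

def qPartialOrder : PartialOrder (HQ h) where
  le := qle h
  le_refl := fun a => Quotient.inductionOn a (fun p => ple_refl h p)
  le_trans := fun a b c => Quotient.inductionOn₃ a b c
    (fun p q s (h1 : ple r p q) (h2 : ple r q s) => ple_trans h h1 h2)
  le_antisymm := fun a b => Quotient.inductionOn₂ a b
    (fun p q (h1 : ple r p q) (h2 : ple r q p) => Quotient.sound ⟨h1, h2⟩)

def qAddCommGroup : AddCommGroup (HQ h) :=
  letI : Add (HQ h) := ⟨qadd h⟩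
  letI : Zero (HQ h) := ⟨qmk h pzero⟩
  letI : Neg (HQ h) := ⟨qneg h⟩
  {
  add := qadd h
  zero := qmk h pzero
  neg := qneg h
  add_assoc := fun a b c => Quotient.inductionOn₃ a b c (fun p q s =>
    congrArg (qmk h) (pp_ext (add_assoc _ _ _) (add_assoc _ _ _)))
  add_comm := fun a b => Quotient.inductionOn₂ a b (fun p q =>
    congrArg (qmk h) (padd_comm p q))
  zero_add := fun a => Quotient.inductionOn a (fun p =>
    congrArg (qmk h) (by apply pp_ext <;> simp [padd, pzero, zero_sadd]))
  add_zero := fun a => Quotient.inductionOn a (fun p =>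
    congrArg (qmk h) (by apply pp_ext <;> simp [padd, pzero, sadd_zero]))
  neg_add_cancel := fun a => Quotient.inductionOn a (fun p =>
    Quotient.sound ⟨pneg_add_cancel_le h p, pzero_le_pneg_add_cancel h p⟩)
  nsmul := nsmulRec
  zsmul := zsmulRec }

def qLattice : Lattice (HQ h) :=
  { qPartialOrder h with
    sup := qsup h
    le_sup_left := fun a b => Quotient.inductionOn₂ a b (fun p q => le_psup_left h p q)
    le_sup_right := fun a b => Quotient.inductionOn₂ a b (fun p q => le_psup_right h p q)
    sup_le := fun a b c => Quotient.inductionOn₃ a b c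
      (fun p q s (h1 : ple r p s) (h2 : ple r q s) => psup_le h h1 h2)
    inf := qinf h
    inf_le_left := fun a b => Quotient.inductionOn₂ a b (fun p q => pinf_le_left h p q)
    inf_le_right := fun a b => Quotient.inductionOn₂ a b (fun p q => pinf_le_right h p q)
    le_inf := fun a b c => Quotient.inductionOn₃ a b c
      (fun p q s (h1 : ple r p q) (h2 : ple r p s) => le_pinf h h1 h2) }

lemma qadd_covariant : ∀ x y z : HQ h, qle h x y → qle h (qadd h x z) (qadd h y z) :=
  fun a b c => Quotient.inductionOn₃ a b c
    (fun p q s (h1 : ple r p q) => ple_add' h h1 (s := s))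

def phi (g : G) : HQ h :=
  qmk h ⟨({g}, {0}), ⟨Finset.singleton_nonempty _, Finset.singleton_nonempty _⟩⟩

lemma phi_add (a b : G) : phi h (a + b) = qadd h (phi h a) (phi h b) := by
  show qmk h _ = qmk h _
  apply congrArg (qmk h)
  apply pp_ext
  · show ({a + b} : Finset G) = {a} + {b}
    rw [Finset.singleton_add_singleton]
  · show ({0} : Finset G) = {0} + {0}
    rw [zero_sadd]

lemma qle_mk {p q : PP G} : qle h (qmk h p) (qmk h q) ↔ ple r p q := Iff.rfl

def pOfB (B : Finset G) (hB : B.Nonempty) : PP G :=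
  ⟨(B, {0}), ⟨hB, Finset.singleton_nonempty _⟩⟩

def pOfA (A : Finset G) (hA : A.Nonempty) : PP G :=
  ⟨({0}, -A), ⟨Finset.singleton_nonempty _, hA.neg⟩⟩

def pOfg (g : G) : PP G := ⟨({g}, {0}), ⟨Finset.singleton_nonempty _, Finset.singleton_nonempty _⟩⟩

lemma phi_le_pOfB {B : Finset G} (hB : B.Nonempty) {b : G} (hb : b ∈ B) :
    ple r (pOfg b) (pOfB B hB) := by
  intro t ht
  simp only [pOfg, pOfB] at ht ⊢
  apply mem1 h
  rw [sadd_zero] at ht ⊢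
  simpa using (Finset.mem_singleton.mp ht) ▸ hb

lemma lub_aux {B : Finset G} (hB : B.Nonempty) (z : PP G)
    (hz : ∀ b ∈ B, ple r (pOfg b) z) : ple r (pOfB B hB) z := by
  obtain ⟨⟨E, F⟩, hE, hF⟩ := z
  intro t ht
  simp only [pOfB] at ht ⊢
  obtain ⟨b, hb, f, hf, rfl⟩ := Finset.mem_add.mp ht
  have := hz b hb (b + f) (Finset.add_mem_add (Finset.mem_singleton_self b) hf)
  simpa [pOfg] using this

lemma pOfA_le_phi {A : Finset G} (hA : A.Nonempty) {a : G} (ha : a ∈ A) :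
    ple r (pOfA A hA) (pOfg a) := by
  intro t ht
  simp only [pOfA, pOfg] at ht ⊢
  apply mem1 h
  rw [zero_sadd] at ht
  simp only [Finset.mem_singleton] at ht
  subst ht
  rw [show (0:G) = a + -a from by abel]
  exact Finset.add_mem_add (Finset.mem_singleton_self a)
    (Finset.neg_mem_neg ha)

lemma glb_aux {A : Finset G} (hA : A.Nonempty) (z : PP G)
    (hz : ∀ a ∈ A, ple r z (pOfg a)) : ple r z (pOfA A hA) := by
  obtain ⟨⟨E, F⟩, hE, hF⟩ := z
  intro t ht
  simp only [pOfA] at ht ⊢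
  obtain ⟨e, he, w, hw, rfl⟩ := Finset.mem_add.mp ht
  rw [Finset.mem_neg] at hw
  obtain ⟨a, ha, rfl⟩ := hw
  have h1 : r {e} ({a} + F) := by
    have := hz a ha e (by simp [pOfg, sadd_zero, he])
    simpa [pOfg] using this
  have := trL h (-a) (Finset.singleton_nonempty _) ((Finset.singleton_nonempty a).add hF) h1
  rw [Finset.singleton_add_singleton, ← add_assoc, Finset.singleton_add_singleton,
    neg_add_cancel] at this
  rw [show e + -a = -a + e from by abel]
  rw [zero_sadd] at this ⊢
  exact this

lemma main_iff {A B : Finset G} (hA : A.Nonempty) (hB : B.Nonempty) :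
    r A B ↔ ple r (pOfA A hA) (pOfB B hB) := by
  constructor
  · intro hr
    intro t ht
    simp only [pOfA, pOfB] at ht ⊢
    rw [zero_sadd] at ht
    simp only [Finset.mem_singleton] at ht
    subst ht
    apply dualCancel h {0} (B + -A) A (Finset.singleton_nonempty _) (hB.add hA.neg) hA
    intro a ha
    rw [zero_sadd]
    apply wk h hA hB (le_refl _) ?_ hr
    intro b hb
    rw [Finset.singleton_add]
    apply Finset.mem_vadd_finset.mpr
    refine ⟨b + -a, Finset.add_mem_add hb (Finset.neg_mem_neg ha), ?_⟩
    simp only [vadd_eq_add]; abel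
  · intro hle
    have h0 : r {0} (B + -A) := by
      have := hle 0 (by simp [pOfA, pOfB, zero_sadd])
      simpa [pOfA, pOfB] using this
    apply cancelSet h A B (-A) hA hB hA.neg
    intro k hk
    rw [Finset.mem_neg] at hk
    obtain ⟨a, ha, rfl⟩ := hk
    apply wk h (Finset.singleton_nonempty _) (hB.add hA.neg) ?_ (le_refl _) h0
    intro u hu
    simp only [Finset.mem_singleton] at hu
    subst hu
    rw [Finset.singleton_add]
    apply Finset.mem_vadd_finset.mpr
    exact ⟨a, ha, by simp⟩

end
end RegEntail

/-- The group of ideals associated with a regular entailment relation: a regular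
entailment relation for an ordered abelian group `G` is exactly the trace of a group
homomorphism into a lattice-ordered abelian group. -/
theorem regular_entail_generates_lgroup {G : Type u} [DecidableEq G] [AddCommGroup G] [PartialOrder G] [IsOrderedAddMonoid G]
    (r : Finset G → Finset G → Prop) (h : IsRegularEntailRel r) :
    ∃ (H : Type u) (_ : AddCommGroup H) (_ : Lattice H),
      (∀ x y z : H, x ≤ y → x + z ≤ y + z) ∧
      ∃ φ : G → H, (∀ a b : G, φ (a + b) = φ a + φ b) ∧
        ∀ (A B : Finset G) (hA : A.Nonempty) (hB : B.Nonempty),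
          r A B ↔ A.inf' hA φ ≤ B.sup' hB φ := by
  classical
  letI instL : Lattice (RegEntail.HQ h) := RegEntail.qLattice h
  refine ⟨RegEntail.HQ h, RegEntail.qAddCommGroup h, RegEntail.qLattice h, ?_,
    RegEntail.phi h, ?_, ?_⟩
  · intro x y z hxy
    exact RegEntail.qadd_covariant h x y z hxy
  · intro a b
    exact RegEntail.phi_add h a b
  · intro A B hA hB
    rw [RegEntail.main_iff h hA hB]
    have hsup : B.sup' hB (RegEntail.phi h) = RegEntail.qmk h (RegEntail.pOfB B hB) := by
      apply le_antisymm
      · apply Finset.sup'_le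
        intro b hb
        exact RegEntail.phi_le_pOfB h hB hb
      · obtain ⟨z, hz⟩ := Quotient.exists_rep (B.sup' hB (RegEntail.phi h))
        rw [← hz]
        apply RegEntail.lub_aux h hB z
        intro b hb
        have := Finset.le_sup' (RegEntail.phi h) hb
        rw [← hz] at this
        exact this
    have hinf : A.inf' hA (RegEntail.phi h) = RegEntail.qmk h (RegEntail.pOfA A hA) := by
      apply le_antisymm
      · obtain ⟨z, hz⟩ := Quotient.exists_rep (A.inf' hA (RegEntail.phi h))
        rw [← hz]
        apply RegEntail.glb_aux h hA z
        intro a ha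
        have := Finset.inf'_le (RegEntail.phi h) ha
        rw [← hz] at this
        exact this
      · apply Finset.le_inf'
        intro a ha
        exact RegEntail.pOfA_le_phi h hA ha
    rw [hsup, hinf]
    exact Iff.rfl
end
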